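/- arXiv:1203.4041 — 5 statements merged into one kernel-verified Lean document; each statement's English description precedes it below -/
import Mathlib

section
/- In a series-parallel graph, a simple cycle does not cross any central cut more than twice; that is, if C⊆V is such that both C and V∖C induce connected subgraphs, then any simple cycle contains at most two edges with exactly one endpoint in C. -/
/-- `G` has a minor isomorphic to the pattern graph `P`: there are disjoint
nonempty connected branch sets, one for each vertex of `P`, with an edge of
`G` between the branch sets of any two adjacent vertices of `P`. -/
def HasMinorPattern {V W : Type*} (G : SimpleGraph V) (P : SimpleGraph W) : Prop :=
  ∃ B : W → Set V,
    (∀ i, (B i).Nonempty) ∧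
    (∀ i, (G.induce (B i)).Connected) ∧
    (Pairwise fun i j => Disjoint (B i) (B j)) ∧
    (∀ i j, P.Adj i j → ∃ u ∈ B i, ∃ v ∈ B j, G.Adj u v)

/-- A graph is series-parallel iff it has no `K₄` minor. -/
def SeriesParallel {V : Type*} (G : SimpleGraph V) : Prop :=
  ¬ HasMinorPattern G (⊤ : SimpleGraph (Fin 4))

/-!
If a cycle crosses the cut at least three times, read it as a periodic sequence `c` starting just
after a crossing edge; exchanging `C` and `Cᶜ` if necessary, it begins with a run
`c 0, …, c (a-1)` in `C`, ends outside `C`, and `C` contains a later vertex of the cycle.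
Grow a connected set `M ⊆ C` from `c 0` until it first touches the cycle outside the initial
run, at `c j' ∈ C`; this vertex splits the rest of the cycle into arcs `L = c [a, j')` and
`R = c (j', n)`, both leaving `C`. Grow a connected set `M' ⊆ Cᶜ` from `c a` until it first
touches `R`. The sets `c [0, a) ∪ M`, `{c j'}`, `L ∪ M'` and `R` are the branch sets of a
`K₄` minor.
-/

open Set
open scoped Finset

lemma exists_gap_of_two_changes {P : ℕ → Prop} {m k₁ k₂ : ℕ}
    (h0 : P 0) (hm : ¬P m) (hk : k₁ ≠ k₂) (hk₁ : k₁ < m) (hk₂ : k₂ < m)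
    (h₁ : ¬(P k₁ ↔ P (k₁ + 1))) (h₂ : ¬(P k₂ ↔ P (k₂ + 1))) :
    ∃ a j, 0 < a ∧ a < j ∧ j < m ∧ (∀ k < a, P k) ∧ ¬P a ∧ P j := by
  classical
  have hex : ∃ k, ¬P k := ⟨m, hm⟩
  have ha : ¬P (Nat.find hex) := Nat.find_spec hex
  have hlt : ∀ k < Nat.find hex, P k := fun k hk => not_not.mp (Nat.find_min hex hk)
  have ham : Nat.find hex ≤ m := Nat.find_min' hex hm
  have ha0 : 0 < Nat.find hex := Nat.pos_of_ne_zero fun h => ha (h ▸ h0)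
  suffices ∃ j, Nat.find hex < j ∧ j < m ∧ P j by
    obtain ⟨j, hj⟩ := this
    exact ⟨Nat.find hex, j, ha0, hj.1, hj.2.1, hlt, ha, hj.2.2⟩
  by_contra! H
  have hP : ∀ k ≤ m, (P k ↔ k < Nat.find hex) := fun k hk => by
    rcases lt_trichotomy k (Nat.find hex) with h | rfl | h
    · exact iff_of_true (hlt k h) h
    · exact iff_of_false ha (lt_irrefl _)
    · refine iff_of_false ?_ (by omega)
      rcases hk.lt_or_eq with hk | rfl
      exacts [H k h hk, hm]
  rw [hP k₁ hk₁.le, hP (k₁ + 1) hk₁] at h₁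
  rw [hP k₂ hk₂.le, hP (k₂ + 1) hk₂] at h₂
  omega

lemma disjoint_image_Ico_of_injOn {α : Type*} {c : ℕ → α} {n : ℕ} (hinj : InjOn c (Iio n))
    {l r l' r' : ℕ} (h : r ≤ l') (h' : l' ≤ r') (h'' : r' ≤ n) :
    Disjoint (c '' Ico l r) (c '' Ico l' r') :=
  (Ico_disjoint_Ico_same.mono_right (Ico_subset_Ico_left h)).image hinj
    (fun k hk => by simp only [mem_Ico, mem_Iio] at hk ⊢; omega)
    (fun k hk => by simp only [mem_Ico, mem_Iio] at hk ⊢; omega)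

namespace SimpleGraph

variable {V : Type*} {G : SimpleGraph V}

lemma hasMinorPattern_top_of_lt {W : Type*} [LinearOrder W] (B : W → Set V)
    (hne : ∀ i, (B i).Nonempty) (hconn : ∀ i, (G.induce (B i)).Connected)
    (hdisj : ∀ i j, i < j → Disjoint (B i) (B j))
    (hadj : ∀ i j, i < j → ∃ u ∈ B i, ∃ v ∈ B j, G.Adj u v) :
    HasMinorPattern G (⊤ : SimpleGraph W) := by
  refine ⟨B, hne, hconn, fun i j hij => ?_, fun i j hij => ?_⟩
  · rcases hij.lt_or_gt with h | h
    exacts [hdisj i j h, (hdisj j i h).symm]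
  · rcases (top_adj i j |>.mp hij).lt_or_gt with h | h
    · exact hadj i j h
    · obtain ⟨u, hu, v, hv, huv⟩ := hadj j i h
      exact ⟨v, hv, u, hu, huv.symm⟩

lemma connected_induce_singleton (v : V) : (G.induce {v}).Connected := by
  rw [induce_singleton_eq_top]
  exact connected_top

lemma Walk.exists_connected_adj_of_support_subset {S Y : Set V} {a b : V} (w : G.Walk a b)
    (hw : ∀ z ∈ w.support, z ∈ S) (ha : a ∉ Y) (hb : b ∈ Y) :
    ∃ M ⊆ S \ Y, a ∈ M ∧ (G.induce M).Connected ∧ ∃ u ∈ M, ∃ y ∈ S ∩ Y, G.Adj u y := by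
  induction w with
  | nil => exact absurd hb ha
  | @cons a a' b h w ih =>
    have haS : a ∈ S := hw a w.support.mem_cons_self
    have ha'S : a' ∈ S := hw a' (List.mem_cons_of_mem _ w.start_mem_support)
    by_cases ha' : a' ∈ Y
    · exact ⟨{a}, by simpa using ⟨haS, ha⟩, rfl, connected_induce_singleton a,
        a, rfl, a', ⟨ha'S, ha'⟩, h⟩
    obtain ⟨M, hMSY, ha'M, hM, u, huM, hu⟩ :=
      ih (fun z hz => hw z (List.mem_cons_of_mem _ hz)) ha' hb
    refine ⟨{a} ∪ M, union_subset (by simpa using ⟨haS, ha⟩) hMSY, Or.inl rfl,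
      connected_induce_union (connected_induce_singleton a).preconnected hM.preconnected
        rfl ha'M h, u, Or.inr huM, hu⟩

lemma exists_connected_adj_of_connected_induce {S Y : Set V} (hS : (G.induce S).Connected)
    {a : V} (haS : a ∈ S) (haY : a ∉ Y) (hSY : (S ∩ Y).Nonempty) :
    ∃ M ⊆ S \ Y, a ∈ M ∧ (G.induce M).Connected ∧ ∃ u ∈ M, ∃ y ∈ S ∩ Y, G.Adj u y := by
  obtain ⟨b, hbS, hbY⟩ := hSY
  obtain ⟨w⟩ := hS.preconnected ⟨a, haS⟩ ⟨b, hbS⟩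
  refine (w.map (Embedding.induce S).toHom).exists_connected_adj_of_support_subset
    (fun z hz => ?_) haY hbY
  obtain ⟨z', -, rfl⟩ := List.mem_map.mp (by simpa only [Walk.support_map] using hz)
  exact z'.2

lemma connected_induce_image_Ico {c : ℕ → V} (hc : ∀ k, G.Adj (c k) (c (k + 1))) {l r : ℕ}
    (hlr : l < r) : (G.induce (c '' Ico l r)).Connected := by
  induction r, hlr using Nat.le_induction with
  | base =>
    rw [show Ico l (l + 1) = {l} by ext; simp only [mem_Ico, mem_singleton_iff]; omega,
      image_singleton]
    exact connected_induce_singleton (c l)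
  | succ r hlr ih =>
    rw [show Ico l (r + 1) = Ico l r ∪ {r} by
      ext; simp only [mem_Ico, mem_union, mem_singleton_iff]; omega, image_union, image_singleton]
    have hr : r - 1 + 1 = r := by omega
    exact connected_induce_union ih.preconnected (connected_induce_singleton _).preconnected
      (mem_image_of_mem c (by simp only [mem_Ico]; omega)) rfl (hr ▸ hc (r - 1))

lemma hasMinorPattern_K4_of_cycle_of_crossing_chords {c : ℕ → V} {n a j : ℕ}
    (hadj : ∀ k, G.Adj (c k) (c (k + 1))) (hper : c n = c 0) (hinj : InjOn c (Iio n))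
    (ha : 0 < a) (haj : a < j) (hjn : j + 1 < n) {M M' : Set V}
    (hM : (G.induce M).Connected) (h0M : c 0 ∈ M) (hMc : Disjoint M (c '' Ico a n))
    (hMadj : ∃ u ∈ M, G.Adj u (c j))
    (hM' : (G.induce M').Connected) (haM' : c a ∈ M')
    (hM'c : Disjoint M' (c '' Ico 0 a ∪ c '' Ico j n))
    (hM'adj : ∃ u ∈ M', ∃ y ∈ c '' Ico (j + 1) n, G.Adj u y) (hMM' : Disjoint M M') :
    HasMinorPattern G (⊤ : SimpleGraph (Fin 4)) := by
  have arc_disj : ∀ {l r l' r' : ℕ}, r ≤ l' → l' ≤ r' → r' ≤ n →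
      Disjoint (c '' Ico l r) (c '' Ico l' r') := disjoint_image_Ico_of_injOn hinj
  have mem_arc : ∀ {k l r : ℕ}, l ≤ k → k < r → c k ∈ c '' Ico l r :=
    fun h h' => mem_image_of_mem c ⟨h, h'⟩
  have hMc' : ∀ {l r : ℕ}, a ≤ l → r ≤ n → Disjoint M (c '' Ico l r) :=
    fun hl hr => hMc.mono_right (image_mono (Ico_subset_Ico hl hr))
  have hM'c' : ∀ {l r : ℕ}, j ≤ l → r ≤ n → Disjoint M' (c '' Ico l r) :=
    fun hl hr => hM'c.mono_right (subset_union_of_subset_right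
      (image_mono (Ico_subset_Ico hl hr)) _)
  have hadj_pred : ∀ {k : ℕ}, 0 < k → G.Adj (c (k - 1)) (c k) := fun {k} hk => by
    simpa only [Nat.sub_add_cancel hk] using hadj (k - 1)
  refine hasMinorPattern_top_of_lt
    ![c '' Ico 0 a ∪ M, c '' Ico j (j + 1), c '' Ico a j ∪ M', c '' Ico (j + 1) n]
    ?_ ?_ ?_ ?_
  · intro i
    fin_cases i
    exacts [⟨c 0, Or.inr h0M⟩, ⟨c j, mem_arc le_rfl j.lt_succ_self⟩, ⟨c a, Or.inr haM'⟩,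
      ⟨c (n - 1), mem_arc (by omega) (by omega)⟩]
  · intro i
    fin_cases i
    · exact induce_union_connected (connected_induce_image_Ico hadj ha).preconnected
        hM.preconnected ⟨c 0, mem_arc le_rfl ha, h0M⟩
    · exact connected_induce_image_Ico hadj j.lt_succ_self
    · exact induce_union_connected (connected_induce_image_Ico hadj haj).preconnected
        hM'.preconnected ⟨c a, mem_arc le_rfl haj, haM'⟩
    · exact connected_induce_image_Ico hadj hjn
  · intro i i' hii'
    fin_cases i <;> fin_cases i' <;> simp only [Fin.lt_def] at hii' <;> (try omega) <;>
      simp only [Fin.zero_eta, Fin.mk_one, Fin.reduceFinMk, Matrix.cons_val]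
    · exact (arc_disj haj.le (by omega) (by omega)).union_left (hMc' haj.le (by omega))
    · exact ((arc_disj le_rfl haj.le (by omega)).union_right
        (hM'c.mono_right subset_union_left).symm).union_left
        ((hMc' le_rfl (by omega)).union_right hMM')
    · exact (arc_disj (by omega) (by omega) le_rfl).union_left (hMc' (by omega) le_rfl)
    · exact (arc_disj le_rfl (by omega) (by omega)).symm.union_right
        (hM'c' le_rfl (by omega)).symm
    · exact arc_disj le_rfl (by omega) le_rfl
    · exact (arc_disj (by omega) (by omega) le_rfl).union_left (hM'c' (by omega) le_rfl)
  · intro i i' hii'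
    fin_cases i <;> fin_cases i' <;> simp only [Fin.lt_def] at hii' <;> (try omega) <;>
      simp only [Fin.zero_eta, Fin.mk_one, Fin.reduceFinMk, Matrix.cons_val]
    · obtain ⟨u, huM, hu⟩ := hMadj
      exact ⟨u, Or.inr huM, c j, mem_arc le_rfl j.lt_succ_self, hu⟩
    · exact ⟨c (a - 1), Or.inl (mem_arc (by omega) (by omega)), c a,
        Or.inl (mem_arc le_rfl haj), hadj_pred ha⟩
    · refine ⟨c 0, Or.inl (mem_arc le_rfl ha), c (n - 1), mem_arc (by omega) (by omega), ?_⟩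
      exact (hper ▸ hadj_pred (by omega)).symm
    · exact ⟨c j, mem_arc le_rfl j.lt_succ_self, c (j - 1),
        Or.inl (mem_arc (by omega) (by omega)), (hadj_pred (by omega)).symm⟩
    · exact ⟨c j, mem_arc le_rfl j.lt_succ_self, c (j + 1), mem_arc le_rfl hjn, hadj j⟩
    · obtain ⟨u, huM', y, hyR, hu⟩ := hM'adj
      exact ⟨u, Or.inr huM', y, hyR, hu⟩

lemma hasMinorPattern_K4_of_cycle_gap {C : Set V} (hC : (G.induce C).Connected)
    (hCc : (G.induce Cᶜ).Connected) {c : ℕ → V} {n a j : ℕ} (hadj : ∀ k, G.Adj (c k) (c (k + 1)))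
    (hper : c n = c 0) (hinj : InjOn c (Iio n)) (ha : 0 < a) (hA : ∀ k < a, c k ∈ C)
    (haC : c a ∉ C) (haj : a < j) (hjn : j < n) (hjC : c j ∈ C) (hlast : c (n - 1) ∉ C) :
    HasMinorPattern G (⊤ : SimpleGraph (Fin 4)) := by
  have not_mem_arc : ∀ {k l r : ℕ}, k < n → r ≤ n → (k < l ∨ r ≤ k) → c k ∉ c '' Ico l r :=
    fun hk hr hkl ⟨k', hk', h⟩ => by
      have := hinj (by simp only [mem_Ico, mem_Iio] at hk' ⊢; omega) hk h
      simp only [mem_Ico] at hk'; omega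
  obtain ⟨M, hM, h0M, hMconn, u, huM, _, ⟨hj'C, j', hj', rfl⟩, hu⟩ :=
    exists_connected_adj_of_connected_induce (Y := c '' Ico a n) hC (hA 0 ha)
      (not_mem_arc (by omega) le_rfl (Or.inl ha)) ⟨c j, hjC, j, ⟨haj.le, hjn⟩, rfl⟩
  simp only [mem_Ico] at hj'
  have haj' : a < j' := hj'.1.lt_of_ne fun h => haC (h ▸ hj'C)
  have hj'n : j' + 1 < n := by
    by_contra h
    exact hlast (by rwa [show n - 1 = j' by omega])
  obtain ⟨M', hM', haM', hM'conn, hM'adj⟩ :=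
    exists_connected_adj_of_connected_induce (Y := c '' Ico (j' + 1) n) hCc haC
      (not_mem_arc (by omega) le_rfl (Or.inl (by omega)))
      ⟨c (n - 1), hlast, n - 1, by simp only [mem_Ico]; omega, rfl⟩
  have hMC : M ⊆ C := hM.trans sdiff_subset
  have hM'C : M' ⊆ Cᶜ := hM'.trans sdiff_subset
  refine hasMinorPattern_K4_of_cycle_of_crossing_chords hadj hper hinj ha haj' hj'n hMconn h0M
    (disjoint_sdiff_left.mono_left hM) ⟨u, huM, hu⟩ hM'conn haM' ?_
    (by obtain ⟨u', hu', y', hy', h⟩ := hM'adj; exact ⟨u', hu', y', hy'.2, h⟩)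
    (disjoint_compl_right.mono hMC hM'C)
  refine Set.disjoint_left.mpr fun x hx => ?_
  rintro (⟨k, hk, rfl⟩ | ⟨k, hk, rfl⟩)
  · exact (hM' hx).1 (hA k hk.2)
  · obtain rfl | hkj' := eq_or_ne k j'
    · exact (hM' hx).1 hj'C
    · exact (hM' hx).2 ⟨k, by simp only [mem_Ico] at hk ⊢; omega, rfl⟩

lemma hasMinorPattern_K4_of_cycle_crossings {C : Set V} (hC : (G.induce C).Connected)
    (hCc : (G.induce Cᶜ).Connected) {c : ℕ → V} {n k₁ k₂ : ℕ}
    (hadj : ∀ k, G.Adj (c k) (c (k + 1))) (hper : c n = c 0) (hinj : InjOn c (Iio n))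
    (hk : k₁ ≠ k₂) (hk₁ : k₁ < n - 1) (hk₂ : k₂ < n - 1) (hlast : ¬(c (n - 1) ∈ C ↔ c 0 ∈ C))
    (h₁ : ¬(c k₁ ∈ C ↔ c (k₁ + 1) ∈ C)) (h₂ : ¬(c k₂ ∈ C ↔ c (k₂ + 1) ∈ C)) :
    HasMinorPattern G (⊤ : SimpleGraph (Fin 4)) := by
  wlog h0 : c 0 ∈ C generalizing C
  · refine this hCc (by rwa [compl_compl]) ?_ ?_ ?_ h0 <;>
      simpa only [mem_compl_iff, not_iff_not]
  obtain ⟨a, j, ha, haj, hjn, hA, haC, hjC⟩ :=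
    exists_gap_of_two_changes (P := (c · ∈ C)) h0 (by tauto) hk hk₁ hk₂ h₁ h₂
  exact hasMinorPattern_K4_of_cycle_gap hC hCc hadj hper hinj ha hA haC haj (by omega) hjC
    (by tauto)

namespace Walk

variable {u v : V}

def getCycleVert (p : G.Walk u u) (k : ℕ) : V := p.getVert (k % p.length)

lemma getCycleVert_add_length (p : G.Walk u u) (k : ℕ) :
    p.getCycleVert (k + p.length) = p.getCycleVert k := by
  rw [getCycleVert, Nat.add_mod_right, getCycleVert]

lemma getCycleVert_of_le {p : G.Walk u u} {k : ℕ} (hk : k ≤ p.length) :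
    p.getCycleVert k = p.getVert k := by
  rcases hk.lt_or_eq with hk | rfl
  · rw [getCycleVert, Nat.mod_eq_of_lt hk]
  · rw [getCycleVert, Nat.mod_self, getVert_zero, getVert_length]

lemma adj_getCycleVert_succ {p : G.Walk u u} (hp : ¬p.Nil) (k : ℕ) :
    G.Adj (p.getCycleVert k) (p.getCycleVert (k + 1)) := by
  have hk := Nat.mod_lt k (not_nil_iff_lt_length.mp hp)
  have hsucc : p.getCycleVert (k + 1) = p.getCycleVert (k % p.length + 1) := by
    rw [getCycleVert, getCycleVert, Nat.mod_add_mod]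
  rw [hsucc, getCycleVert_of_le hk, getCycleVert]
  exact p.adj_getVert_succ hk

lemma IsCycle.injOn_getCycleVert_add {p : G.Walk u u} (hp : p.IsCycle) (t : ℕ) :
    InjOn (fun k => p.getCycleVert (k + t)) (Iio p.length) := by
  intro k hk k' hk' h
  have hn : 0 < p.length := by have := hp.three_le_length; omega
  have hmod : (k + t) % p.length = (k' + t) % p.length :=
    hp.getVert_injOn' (Nat.le_sub_one_of_lt (Nat.mod_lt _ hn))
      (Nat.le_sub_one_of_lt (Nat.mod_lt _ hn)) h
  have := Nat.ModEq.add_right_cancel' t hmod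
  rwa [Nat.ModEq, Nat.mod_eq_of_lt hk, Nat.mod_eq_of_lt hk'] at this

lemma countP_darts_eq_card_filter (p : G.Walk u v) (P : V → V → Prop) [DecidableRel P] :
    p.darts.countP (fun d => decide (P d.toProd.1 d.toProd.2)) =
      #{k ∈ Finset.range p.length | P (p.getVert k) (p.getVert (k + 1))} := by
  induction p with
  | nil => rfl
  | cons h p ih =>
    rw [darts_cons, List.countP_cons, ih, length_cons, Finset.card_filter, Finset.card_filter,
      Finset.sum_range_succ']
    simp only [getVert_cons_succ, getVert_zero, decide_eq_true_eq]
    congr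

end Walk

lemma Walk.IsCycle.hasMinorPattern_K4_of_three_crossings {C : Set V} [DecidablePred (· ∈ C)]
    (hC : (G.induce C).Connected) (hCc : (G.induce Cᶜ).Connected) {u : V} {p : G.Walk u u}
    (hp : p.IsCycle)
    (h3 : 2 < #{k ∈ Finset.range p.length | ¬(p.getVert k ∈ C ↔ p.getVert (k + 1) ∈ C)}) :
    HasMinorPattern G (⊤ : SimpleGraph (Fin 4)) := by
  set K := {k ∈ Finset.range p.length | ¬(p.getVert k ∈ C ↔ p.getVert (k + 1) ∈ C)}
  have hK : K.Nonempty := Finset.card_pos.mp (by omega)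
  set i := K.min' hK
  have hiK : i ∈ K := K.min'_mem hK
  obtain ⟨k₁, hk₁, k₂, hk₂, hk⟩ := Finset.one_lt_card.mp
    (show 1 < #(K.erase i) by rw [Finset.card_erase_of_mem hiK]; omega)
  have later : ∀ k ∈ K.erase i, i < k ∧ k < p.length ∧
      ¬(p.getVert k ∈ C ↔ p.getVert (k + 1) ∈ C) := fun k hk => by
    obtain ⟨hki, hkK⟩ := Finset.mem_erase.mp hk
    have := K.min'_le k hkK
    simp only [K, Finset.mem_filter, Finset.mem_range] at hkK
    exact ⟨lt_of_le_of_ne this (Ne.symm hki), hkK⟩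
  simp only [K, Finset.mem_filter, Finset.mem_range] at hiK
  let c k := p.getCycleVert (k + (i + 1))
  have hc : ∀ k, k + (i + 1) ≤ p.length → c k = p.getVert (k + (i + 1)) :=
    fun k hk => Walk.getCycleVert_of_le hk
  have hcross : ∀ k ∈ K.erase i, ¬(c (k - (i + 1)) ∈ C ↔ c (k - (i + 1) + 1) ∈ C) := by
    intro k hk
    obtain ⟨hik, hkn, hkC⟩ := later k hk
    rwa [hc _ (by omega), hc _ (by omega), show k - (i + 1) + (i + 1) = k by omega,
      show k - (i + 1) + 1 + (i + 1) = k + 1 by omega]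
  obtain ⟨hik₁, hk₁n, -⟩ := later k₁ hk₁
  obtain ⟨hik₂, hk₂n, -⟩ := later k₂ hk₂
  have hadj : ∀ k, G.Adj (c k) (c (k + 1)) := fun k => by
    simpa only [c, Nat.add_right_comm k 1] using Walk.adj_getCycleVert_succ hp.not_nil _
  refine hasMinorPattern_K4_of_cycle_crossings (n := p.length) (k₁ := k₁ - (i + 1))
    (k₂ := k₂ - (i + 1)) hC hCc hadj ?_ (hp.injOn_getCycleVert_add _) (by omega) (by omega)
    (by omega) ?_ (hcross k₁ hk₁) (hcross k₂ hk₂)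
  · simp only [c, zero_add, add_comm p.length, Walk.getCycleVert_add_length]
  · rw [show c (p.length - 1) = p.getVert i by
        simp only [c, show p.length - 1 + (i + 1) = i + p.length by omega,
          Walk.getCycleVert_add_length, Walk.getCycleVert_of_le hiK.1.le],
      hc 0 (by omega), zero_add]
    exact hiK.2

end SimpleGraph

theorem stmt4_general {V : Type*}
    (G : SimpleGraph V) (hsp : SeriesParallel G)
    (C : Set V) [DecidablePred (· ∈ C)]
    (hC : (G.induce C).Connected) (hCc : (G.induce Cᶜ).Connected)
    {v : V} (p : G.Walk v v) (hp : p.IsCycle) :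
    (p.darts.countP fun d =>
      decide ((d.toProd.1 ∈ C ∧ d.toProd.2 ∉ C) ∨ (d.toProd.1 ∉ C ∧ d.toProd.2 ∈ C))) ≤ 2 := by
  by_contra! h
  refine hsp (hp.hasMinorPattern_K4_of_three_crossings hC hCc ?_)
  rw [p.countP_darts_eq_card_filter fun x y => (x ∈ C ∧ y ∉ C) ∨ (x ∉ C ∧ y ∈ C)] at h
  exact h.trans_eq (congrArg Finset.card (Finset.filter_congr fun k _ => by tauto))

/-- In a series-parallel graph, a simple cycle crosses any central cut at
most twice. -/
theorem stmt4 {V : Type*} [Fintype V] [DecidableEq V]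
    (G : SimpleGraph V) (hsp : SeriesParallel G)
    (C : Set V) [DecidablePred (· ∈ C)]
    (hC : (G.induce C).Connected) (hCc : (G.induce Cᶜ).Connected)
    {v : V} (p : G.Walk v v) (hp : p.IsCycle) :
    (p.darts.countP fun d =>
      decide ((d.toProd.1 ∈ C ∧ d.toProd.2 ∉ C) ∨ (d.toProd.1 ∉ C ∧ d.toProd.2 ∈ C))) ≤ 2 :=
  stmt4_general G hsp C hC hCc p hp
end

section
/- In a 2-connected graph G, for any two vertices s and t and any edge (u,v), there is a simple path from s to t that uses the edge (u,v). -/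
/-!
Add to `G` a vertex `z` joined to `s` and `t`, and then a vertex `m` joined to `u` and `v`.
Adding a vertex with at least two neighbours to a connected graph without cut vertices creates
no cut vertex, so by Whitney's theorem `z` and `m` lie on a common cycle. Deleting `z` and `m`
from that cycle leaves two disjoint paths in `G` from `{s, t}` to `{u, v}`, and the edge `uv`
joins them into an `s`–`t` path.

Whitney's theorem is proved along a path `a, a₁, …, b`: once `a₁` and `b` lie on a cycle `C`,
a path from `a` to `C` avoiding `a₁` reroutes `C` through `a`.
-/

/-- A graph is 2-connected (biconnected): it is connected, has at least 3
vertices, and deleting any single vertex leaves it connected. -/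
def TwoConnected {V : Type*} [Fintype V] (G : SimpleGraph V) : Prop :=
  3 ≤ Fintype.card V ∧ G.Connected ∧
    ∀ x : V, (G.induce ({x}ᶜ : Set V)).Connected

namespace SimpleGraph

variable {V : Type*} {G : SimpleGraph V} {a b c d w x : V}

namespace Walk

theorem IsPath.append {p : G.Walk a w} {q : G.Walk w b} (hp : p.IsPath) (hq : q.IsPath)
    (hpq : ∀ y ∈ p.support, y ∈ q.support → y = w) : (p.append q).IsPath := by
  rw [isPath_def, support_append]
  refine hp.support_nodup.append hq.support_nodup.tail fun y hyp hyq ↦ ?_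
  obtain rfl := hpq y hyp (List.mem_of_mem_tail hyq)
  have hq' := hq.support_nodup
  rw [← cons_tail_support] at hq'
  exact (List.nodup_cons.mp hq').1 hyq

theorem IsPath.append_cons_reverse {p : G.Walk a c} {q : G.Walk b d} (hp : p.IsPath)
    (hq : q.IsPath) (hpq : p.support.Disjoint q.support) (hcd : G.Adj c d) :
    (p.append (.cons hcd q.reverse)).IsPath := by
  refine hp.append (hq.reverse.cons fun hc ↦ hpq p.end_mem_support (by simpa using hc)) ?_
  intro y hyp hy
  rcases List.mem_cons.mp (by simpa using hy) with rfl | hyq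
  · rfl
  · exact absurd hyq (hpq hyp)

theorem IsPath.eq_of_mem_takeUntil_of_mem_dropUntil [DecidableEq V] {p : G.Walk a b}
    (hp : p.IsPath) (hx : x ∈ p.support) {y : V} (hy : y ∈ (p.takeUntil x hx).support)
    (hy' : y ∈ (p.dropUntil x hx).support) : y = x := by
  by_contra hyx
  exact IsPath.ne_of_mem_support_of_append (by rwa [take_spec]) hyx hy hy' rfl

theorem exists_isPath_support_subset_first_mem (p : G.Walk a b) {S : Set V} (hb : b ∈ S) :
    ∃ x ∈ S, ∃ r : G.Walk a x, r.IsPath ∧ r.support ⊆ p.support ∧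
      ∀ y ∈ r.support, y ∈ S → y = x := by
  classical
  suffices ∃ x ∈ S, ∃ r : G.Walk a x, r.support ⊆ p.support ∧
      ∀ y ∈ r.support, y ∈ S → y = x by
    obtain ⟨x, hx, r, hsub, hfirst⟩ := this
    have hbypass := r.support_bypass_subset_support
    exact ⟨x, hx, r.bypass, r.bypass_isPath, fun y hy ↦ hsub (hbypass hy),
      fun y hy ↦ hfirst y (hbypass hy)⟩
  induction p with
  | nil => exact ⟨_, hb, nil, by simp, by simp⟩
  | @cons a _ _ h p ih =>
    by_cases ha : a ∈ S
    · exact ⟨a, ha, nil, by simp, by simp⟩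
    obtain ⟨x, hx, r, hsub, hfirst⟩ := ih hb
    refine ⟨x, hx, cons h r, by simpa using List.cons_subset_cons a hsub, ?_⟩
    rintro y hy hyS
    rcases List.mem_cons.mp (support_cons h r ▸ hy) with rfl | hy
    exacts [absurd hyS ha, hfirst y hy hyS]

end Walk

def NoCutVertex (G : SimpleGraph V) : Prop :=
  ∀ x, (G.induce {x}ᶜ).Preconnected

theorem noCutVertex_iff : G.NoCutVertex ↔
    ∀ ⦃x a b : V⦄, a ≠ x → b ≠ x → ∃ p : G.Walk a b, x ∉ p.support := by
  refine ⟨fun hG x a b ha hb ↦ ?_, fun hG x ⟨a, ha⟩ ⟨b, hb⟩ ↦ ?_⟩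
  · obtain ⟨p⟩ := hG x ⟨a, Set.mem_compl_singleton_iff.mpr ha⟩
      ⟨b, Set.mem_compl_singleton_iff.mpr hb⟩
    refine ⟨p.map (Embedding.induce _).toHom, ?_⟩
    show x ∉ (p.map (Embedding.induce {x}ᶜ).toHom).support
    rw [Walk.support_map]
    simp
  · obtain ⟨p, hp⟩ := hG ha hb
    exact ⟨p.induce {x}ᶜ fun y hy ↦ ne_of_mem_of_not_mem hy hp⟩

/-- `a` and `b` lie on a common cycle, given by its two arcs between them. -/
def OnCommonCycle (G : SimpleGraph V) (a b : V) : Prop :=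
  ∃ p q : G.Walk a b, p.IsPath ∧ q.IsPath ∧ 3 ≤ p.length + q.length ∧
    ∀ y ∈ p.support, y ∈ q.support → y = a ∨ y = b

theorem OnCommonCycle.ne (h : G.OnCommonCycle a b) : a ≠ b := by
  rintro rfl
  obtain ⟨p, q, hp, hq, hlen, -⟩ := h
  rw [Walk.isPath_iff_nil] at hp hq
  rw [hp.length_eq_zero, hq.length_eq_zero] at hlen
  omega

theorem NoCutVertex.onCommonCycle_of_adj (hG : G.NoCutVertex) (hV : 3 ≤ ENat.card V)
    (hab : G.Adj a b) : G.OnCommonCycle a b := by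
  classical
  rw [noCutVertex_iff] at hG
  obtain ⟨c, hca, hcb⟩ := ENat.exists_ne_ne_of_three_le hV a b
  obtain ⟨p, hbp⟩ := hG hab.ne hcb
  obtain ⟨d, had, p, rfl⟩ := Walk.exists_eq_cons_of_ne hca.symm p
  have hdb : d ≠ b := by rintro rfl; simp at hbp
  obtain ⟨q, hqa⟩ := hG had.ne' hab.ne'
  refine ⟨hab.toWalk, .cons had q.bypass, hab.isPath_toWalk,
    q.bypass_isPath.cons fun ha ↦ hqa (q.support_bypass_subset_support ha), ?_, by simp⟩
  have := Walk.not_nil_iff_lt_length.mp (Walk.not_nil_of_ne (p := q.bypass) hdb)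
  simp only [Adj.toWalk, Walk.length_cons, Walk.length_nil]
  omega

theorem onCommonCycle_of_reroute {p q : G.Walk w b} (hp : p.IsPath) (hq : q.IsPath)
    (hwb : w ≠ b) (hpq : ∀ y ∈ p.support, y ∈ q.support → y = w ∨ y = b) (haw : G.Adj a w)
    (hab : a ≠ b) {r : G.Walk a x} (hr : r.IsPath) (hw : w ∉ r.support) (hx : x ∈ p.support)
    (hfirst : ∀ y ∈ r.support, y ∈ p.support ∨ y ∈ q.support → y = x) :
    G.OnCommonCycle a b := by
  classical
  have hxw : x ≠ w := fun h ↦ hw (h ▸ r.end_mem_support)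
  have hxq : x ∈ q.support → x = b := fun h ↦ (hpq x hx h).resolve_left hxw
  have hqa : a ∉ q.support := fun ha ↦ by
    obtain rfl := hfirst a r.start_mem_support (.inr ha)
    exact hab (hxq ha)
  refine ⟨r.append (p.dropUntil x hx), .cons haw q,
    hr.append (hp.dropUntil hx) fun y hy hy' ↦
      hfirst y hy (.inl (p.support_dropUntil_subset_support hx hy')),
    hq.cons hqa, ?_, ?_⟩
  · have := Walk.not_nil_iff_lt_length.mp
      (Walk.not_nil_of_ne (p := r.append (p.dropUntil x hx)) hab)
    have := Walk.not_nil_iff_lt_length.mp (Walk.not_nil_of_ne (p := q) hwb)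
    simp only [Walk.length_cons]
    omega
  intro y hy hyq
  rcases List.mem_cons.mp (Walk.support_cons haw q ▸ hyq) with rfl | hyq
  · exact .inl rfl
  refine .inr ?_
  rcases (Walk.mem_support_append_iff _ _).mp hy with hyr | hyd
  · obtain rfl := hfirst y hyr (.inr hyq)
    exact hxq hyq
  · refine (hpq y (p.support_dropUntil_subset_support hx hyd) hyq).resolve_left fun hyw ↦ ?_
    subst hyw
    exact hxw (hp.eq_of_mem_takeUntil_of_mem_dropUntil hx (p.takeUntil x hx).start_mem_support
      hyd).symm

theorem OnCommonCycle.of_adj (hG : G.NoCutVertex) (h : G.OnCommonCycle w b) (haw : G.Adj a w)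
    (hab : a ≠ b) : G.OnCommonCycle a b := by
  have hwb := h.ne
  obtain ⟨p, q, hp, hq, -, hpq⟩ := h
  obtain ⟨r₀, hr₀⟩ := noCutVertex_iff.mp hG haw.ne hwb.symm
  obtain ⟨x, hx, r, hr, hsub, hfirst⟩ :=
    r₀.exists_isPath_support_subset_first_mem (S := {y | y ∈ p.support ∨ y ∈ q.support})
      (.inl p.end_mem_support)
  have hw : w ∉ r.support := fun h ↦ hr₀ (hsub h)
  rcases hx with hxp | hxq
  · exact onCommonCycle_of_reroute hp hq hwb hpq haw hab hr hw hxp hfirst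
  · exact onCommonCycle_of_reroute hq hp hwb (fun y hq hp ↦ hpq y hp hq) haw hab hr hw hxq
      fun y hy h ↦ hfirst y hy h.symm

theorem NoCutVertex.onCommonCycle (hG : G.NoCutVertex) (hV : 3 ≤ ENat.card V) (hab : a ≠ b) :
    G.OnCommonCycle a b := by
  obtain ⟨c, hca, hcb⟩ := ENat.exists_ne_ne_of_three_le hV a b
  obtain ⟨p, -⟩ := noCutVertex_iff.mp hG hca.symm hcb.symm
  clear hca hcb
  induction p with
  | nil => exact absurd rfl hab
  | @cons a w b haw p ih =>
    by_cases hwb : w = b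
    · subst hwb
      exact hG.onCommonCycle_of_adj hV haw
    · exact (ih hwb).of_adj hG haw hab

variable {S : Set V}

def addApex (G : SimpleGraph V) (S : Set V) : SimpleGraph (Option V) where
  Adj
    | some x, some y => G.Adj x y
    | none, some y | some y, none => y ∈ S
    | none, none => False
  symm := ⟨by rintro (_ | x) (_ | y) h <;> first | exact h | exact G.adj_symm h⟩
  loopless := ⟨by rintro (_ | x) h; exacts [h, G.loopless.irrefl x h]⟩

@[simp] theorem addApex_adj_none_some : (G.addApex S).Adj none (some a) ↔ a ∈ S := .rfl
@[simp] theorem addApex_not_adj_none_none : ¬(G.addApex S).Adj none none := id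

def Embedding.addApex (G : SimpleGraph V) (S : Set V) : G ↪g G.addApex S where
  toFun := some
  inj' := Option.some_injective V
  map_rel_iff' := .rfl

def Walk.toAddApex (S : Set V) (p : G.Walk a b) : (G.addApex S).Walk (some a) (some b) :=
  p.map (Embedding.addApex G S).toHom

@[simp] theorem Walk.support_toAddApex (p : G.Walk a b) :
    (p.toAddApex S).support = p.support.map some :=
  p.support_map _

theorem Walk.isPath_toAddApex_iff {p : G.Walk a b} : (p.toAddApex S).IsPath ↔ p.IsPath :=
  isPath_map_iff_of_injective (Embedding.addApex G S).injective

theorem Walk.exists_eq_toAddApex :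
    ∀ {a b : V} (p : (G.addApex S).Walk (some a) (some b)), none ∉ p.support →
      ∃ q : G.Walk a b, p = q.toAddApex S
  | _, _, .nil, _ => ⟨.nil, rfl⟩
  | _, _, .cons (v := some _) h p, hp => by
    obtain ⟨q, rfl⟩ := exists_eq_toAddApex p fun h ↦ hp (by simp [h])
    exact ⟨.cons h q, rfl⟩
  | _, _, .cons (v := none) _ _, hp => by simp at hp

theorem Walk.IsPath.exists_eq_cons_toAddApex {p : (G.addApex S).Walk none (some b)}
    (hp : p.IsPath) : ∃ a, ∃ h : (G.addApex S).Adj none (some a),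
      ∃ q : G.Walk a b, q.IsPath ∧ p = .cons h (q.toAddApex S) := by
  obtain ⟨_ | a, h, p, rfl⟩ := Walk.exists_eq_cons_of_ne (Option.some_ne_none b).symm p
  · exact absurd h addApex_not_adj_none_none
  obtain ⟨hp, hnone⟩ := (Walk.cons_isPath_iff h p).mp hp
  obtain ⟨q, rfl⟩ := p.exists_eq_toAddApex hnone
  exact ⟨a, h, q, Walk.isPath_toAddApex_iff.mp hp, rfl⟩

theorem Preconnected.addApex (hG : G.Preconnected) (hS : S.Nonempty) :
    (G.addApex S).Preconnected := by
  obtain ⟨a, ha⟩ := hS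
  have hsome (b : V) : (G.addApex S).Reachable (some a) (some b) :=
    (hG a b).map (Embedding.addApex G S).toHom
  have hnone : (G.addApex S).Reachable none (some a) := (addApex_adj_none_some.mpr ha).reachable
  rintro (_ | b) (_ | c)
  exacts [.rfl, hnone.trans (hsome c), (hnone.trans (hsome b)).symm,
    (hsome b).symm.trans (hsome c)]

theorem NoCutVertex.addApex (hG : G.NoCutVertex) (hconn : G.Preconnected) (hS : S.Nontrivial) :
    (G.addApex S).NoCutVertex := by
  rw [noCutVertex_iff] at hG ⊢
  intro x a b ha hb
  have reach_some : ∀ y ≠ x,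
      ∃ c, some c ≠ x ∧ ∃ p : (G.addApex S).Walk y (some c), x ∉ p.support := by
    rintro (_ | c) hy
    · obtain ⟨x, rfl⟩ := Option.ne_none_iff_exists'.mp hy.symm
      obtain ⟨c, hc, hcx⟩ := hS.exists_ne x
      exact ⟨c, by simpa using hcx, (addApex_adj_none_some.mpr hc).toWalk,
        by simp [Ne.symm hcx]⟩
    · exact ⟨c, hy, .nil, by simpa using hy.symm⟩
  have reach_between : ∀ c d, some c ≠ x → some d ≠ x →
      ∃ p : (G.addApex S).Walk (some c) (some d), x ∉ p.support := by
    intro c d hc hd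
    cases x with
    | none =>
      obtain ⟨p⟩ := hconn c d
      exact ⟨p.toAddApex S, by simp⟩
    | some x =>
      obtain ⟨p, hp⟩ := hG (by simpa using hc) (by simpa using hd)
      exact ⟨p.toAddApex S, by simpa using hp⟩
  obtain ⟨c, hc, pa, hpa⟩ := reach_some a ha
  obtain ⟨d, hd, pb, hpb⟩ := reach_some b hb
  obtain ⟨p, hp⟩ := reach_between c d hc hd
  exact ⟨pa.append (p.append pb.reverse), by simp [Walk.mem_support_append_iff, hpa, hp, hpb]⟩

theorem NoCutVertex.exists_disjoint_paths (hG : G.NoCutVertex) (hconn : G.Preconnected)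
    {s t u v : V} (hst : s ≠ t) (huv : u ≠ v) :
    ∃ a b c d, s(a, b) = s(s, t) ∧ s(c, d) = s(u, v) ∧
      ∃ (p : G.Walk a c) (q : G.Walk b d),
        p.IsPath ∧ q.IsPath ∧ p.support.Disjoint q.support := by
  let H := (G.addApex {s, t}).addApex (some '' {u, v})
  have hH : H.NoCutVertex := (hG.addApex hconn (Set.nontrivial_pair hst)).addApex
    (hconn.addApex (Set.insert_nonempty s {t}))
    ((Set.nontrivial_pair huv).image (Option.some_injective V))
  have hV : 3 ≤ ENat.card (Option (Option V)) := by
    have : Function.Injective ![(none : Option (Option V)), some none, some (some s)] := by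
      intro i j h
      fin_cases i <;> fin_cases j <;> simp_all
    simpa using ENat.card_le_card_of_injective this
  obtain ⟨p, q, hp, hq, -, hpq⟩ := hH.onCommonCycle hV (a := none) (b := some none) (by simp)
  obtain ⟨_, hmc, p₁, hp₁, rfl⟩ := hp.exists_eq_cons_toAddApex
  obtain ⟨_, hmd, q₁, hq₁, rfl⟩ := hq.exists_eq_cons_toAddApex
  obtain ⟨c, hc, rfl⟩ := addApex_adj_none_some.mp hmc
  obtain ⟨d, hd, rfl⟩ := addApex_adj_none_some.mp hmd
  obtain ⟨a, ha, p₂, hp₂, hp₁_eq⟩ := hp₁.reverse.exists_eq_cons_toAddApex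
  obtain ⟨b, hb, q₂, hq₂, hq₁_eq⟩ := hq₁.reverse.exists_eq_cons_toAddApex
  have hdisj : p₂.support.Disjoint q₂.support := fun y hyp hyq ↦ by
    have h₁ : some y ∈ p₁.reverse.support := by simp [hp₁_eq, hyp]
    have h₂ : some y ∈ q₁.reverse.support := by simp [hq₁_eq, hyq]
    simpa using hpq (some (some y)) (by simpa using h₁) (by simpa using h₂)
  have hab : a ≠ b := fun h ↦ hdisj p₂.start_mem_support (h ▸ q₂.start_mem_support)
  have hcd : c ≠ d := fun h ↦ hdisj p₂.end_mem_support (h ▸ q₂.end_mem_support)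
  refine ⟨a, b, c, d, ?_, ?_, p₂, q₂, hp₂, hq₂, hdisj⟩
  · exact ((Sym2.mem_and_mem_iff hab).mp ⟨by simpa using ha, by simpa using hb⟩).symm
  · exact ((Sym2.mem_and_mem_iff hcd).mp ⟨by simpa using hc, by simpa using hd⟩).symm

theorem NoCutVertex.exists_isPath_mem_edges (hG : G.NoCutVertex) (hconn : G.Preconnected)
    {s t u v : V} (hst : s ≠ t) (huv : G.Adj u v) :
    ∃ p : G.Walk s t, p.IsPath ∧ s(u, v) ∈ p.edges := by
  obtain ⟨a, b, c, d, hab, hcd, p, q, hp, hq, hpq⟩ := hG.exists_disjoint_paths hconn hst huv.ne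
  have hcd' : G.Adj c d := by rw [← G.mem_edgeSet, hcd]; exact huv
  have hr := hp.append_cons_reverse hq hpq hcd'
  have hmem : s(u, v) ∈ (p.append (.cons hcd' q.reverse)).edges := by simp [← hcd]
  rcases Sym2.eq_iff.mp hab with ⟨rfl, rfl⟩ | ⟨rfl, rfl⟩
  · exact ⟨_, hr, hmem⟩
  · exact ⟨_, hr.reverse, by rwa [Walk.edges_reverse, List.mem_reverse]⟩

end SimpleGraph

theorem stmt6_general {V : Type*} [Fintype V]
    (G : SimpleGraph V) (h2c : TwoConnected G)
    (s t u v : V) (hst : s ≠ t) (huv : G.Adj u v) :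
    ∃ p : G.Walk s t, p.IsPath ∧ s(u, v) ∈ p.edges := by
  obtain ⟨-, hconn, hdel⟩ := h2c
  have hG : G.NoCutVertex := fun x ↦ (hdel x).preconnected
  exact hG.exists_isPath_mem_edges hconn.preconnected hst huv

/-- In a 2-connected graph, for any two vertices `s ≠ t` and any edge
`(u,v)`, there is a simple path from `s` to `t` using the edge `(u,v)`. -/
theorem stmt6 {V : Type*} [Fintype V] [DecidableEq V]
    (G : SimpleGraph V) (h2c : TwoConnected G)
    (s t u v : V) (hst : s ≠ t) (huv : G.Adj u v) :
    ∃ p : G.Walk s t, p.IsPath ∧ s(u, v) ∈ p.edges :=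
  stmt6_general G h2c s t u v hst huv
end

section
/- Adding a single edge to a series-parallel graph yields a planar graph; that is, if G has no K₄ minor, then G plus any one additional edge contains neither K₅ nor K₃,₃ as a minor. -/
/-- A graph is planar (Kuratowski/Wagner) iff it has no `K₅` minor and no
`K₃,₃` minor. -/
def PlanarByMinors {V : Type*} (G : SimpleGraph V) : Prop :=
  ¬ HasMinorPattern G (⊤ : SimpleGraph (Fin 5)) ∧
  ¬ HasMinorPattern G (completeBipartiteGraph (Fin 3) (Fin 3))

/-! A `K₅` model in `G + uv` yields a `K₄` model in `G` by discarding the branch set that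
contains `u`. For a `K₃,₃` model, either `uv` joins two branch sets, and `G` keeps a model of
`K₃,₃` minus one edge, or `uv` lies inside one branch set `B i`, which in `G` splits into the
components of `u` and of `v`. Every neighbour of `i` is joined to one of the two components,
and since `i` has only three neighbours one component is joined to all of them but at most
one: again `G` has a model of `K₃,₃` minus an edge. Finally `K₃,₃` minus an edge contracts
to `K₄`, and minors compose. -/

open SimpleGraph

theorem subsingleton_or_subsingleton_of_disjoint {α : Type*} {s t : Set α} {N : Finset α}
    (hst : Disjoint s t) (hs : s ⊆ N) (ht : t ⊆ N) (hN : N.card ≤ 3) :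
    s.Subsingleton ∨ t.Subsingleton := by
  have : Finite s := N.finite_toSet.subset hs
  have : Finite t := N.finite_toSet.subset ht
  rw [← Set.ncard_le_one_iff_subsingleton, ← Set.ncard_le_one_iff_subsingleton]
  have := Set.ncard_le_ncard (Set.union_subset hs ht)
  rw [Set.ncard_union_eq hst, Set.ncard_coe_finset] at this
  omega

section Induce

variable {V W : Type*} {G : SimpleGraph V} {P : SimpleGraph W}

theorem induce_setOf_reachable_connected {S : Set V} {w : V} (hw : w ∈ S) :
    (G.induce {x | ∃ hx : x ∈ S, (G.induce S).Reachable ⟨w, hw⟩ ⟨x, hx⟩}).Connected := by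
  classical
  refine G.induce_connected_of_patches w ⟨hw, .rfl⟩ fun {x} ⟨hx, ⟨p⟩⟩ => ?_
  let q : G.Walk w x := p.map (Embedding.induce S).toHom
  refine ⟨{y | y ∈ q.support}, fun y hy => ?_, q.start_mem_support, q.end_mem_support,
    q.connected_induce_support _ _⟩
  obtain ⟨z, hz, rfl⟩ := List.mem_map.1 (p.support_map _ ▸ hy :)
  exact ⟨z.2, ⟨p.takeUntil z hz⟩⟩

theorem induce_biUnion_connected {B : W → Set V} (hB : ∀ i, (G.induce (B i)).Connected)
    (hadj : ∀ i j, P.Adj i j → ∃ x ∈ B i, ∃ y ∈ B j, G.Adj x y) {S : Set W}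
    (hS : (P.induce S).Connected) : (G.induce (⋃ i ∈ S, B i)).Connected := by
  have hsub : ∀ i ∈ S, B i ⊆ ⋃ i ∈ S, B i := fun i hi => Set.subset_biUnion_of_mem hi
  have reach_in (i : S) {x y : V} (hx : x ∈ B i) (hy : y ∈ B i) :
      (G.induce (⋃ i ∈ S, B i)).Reachable ⟨x, hsub i i.2 hx⟩ ⟨y, hsub i i.2 hy⟩ :=
    ((hB i).preconnected ⟨x, hx⟩ ⟨y, hy⟩).map (G.induceHomOfLE (hsub i i.2)).toHom
  have reach {i j : S} (p : (P.induce S).Walk i j) {x y : V} (hx : x ∈ B i) (hy : y ∈ B j) :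
      (G.induce (⋃ i ∈ S, B i)).Reachable ⟨x, hsub i i.2 hx⟩ ⟨y, hsub j j.2 hy⟩ := by
    induction p generalizing x with
    | nil => exact reach_in _ hx hy
    | @cons a b _ hij _ ih =>
      obtain ⟨x', hx', y', hy', hxy⟩ := hadj _ _ hij
      have hxy' : (G.induce (⋃ i ∈ S, B i)).Adj ⟨x', hsub a a.2 hx'⟩ ⟨y', hsub b b.2 hy'⟩ := hxy
      exact (reach_in _ hx hx').trans (hxy'.reachable.trans (ih hy' hy))
  obtain ⟨i, hi⟩ := hS.nonempty
  obtain ⟨x, hx⟩ := (hB i).nonempty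
  refine (connected_iff_exists_forall_reachable _).2 ⟨⟨x, hsub i hi hx⟩, fun ⟨y, hy⟩ => ?_⟩
  obtain ⟨j, hj, hyj⟩ := Set.mem_iUnion₂.1 hy
  exact reach (hS.preconnected ⟨i, hi⟩ ⟨j, hj⟩).some hx hyj

end Induce

section Minor

variable {V W X : Type*} {G : SimpleGraph V} {P : SimpleGraph W} {Q : SimpleGraph X}

structure IsMinorModel (G : SimpleGraph V) (P : SimpleGraph W) (B : W → Set V) : Prop where
  nonempty : ∀ i, (B i).Nonempty
  connected : ∀ i, (G.induce (B i)).Connected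
  pairwise_disjoint : Pairwise fun i j => Disjoint (B i) (B j)
  exists_adj : ∀ i j, P.Adj i j → ∃ x ∈ B i, ∃ y ∈ B j, G.Adj x y

theorem hasMinorPattern_iff : HasMinorPattern G P ↔ ∃ B, IsMinorModel G P B :=
  ⟨fun ⟨B, h₁, h₂, h₃, h₄⟩ => ⟨B, h₁, h₂, h₃, h₄⟩, fun ⟨B, h₁, h₂, h₃, h₄⟩ => ⟨B, h₁, h₂, h₃, h₄⟩⟩

theorem IsMinorModel.eq_of_mem {B : W → Set V} (h : IsMinorModel G P B) {x : V} {i j : W}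
    (hi : x ∈ B i) (hj : x ∈ B j) : i = j :=
  by_contra fun hij => (h.pairwise_disjoint hij).ne_of_mem hi hj rfl

theorem IsMinorModel.comp {B : W → Set V} (h : IsMinorModel G P B) (f : Q →g P)
    (hf : Function.Injective f) : IsMinorModel G Q (B ∘ f) where
  nonempty i := h.nonempty (f i)
  connected i := h.connected (f i)
  pairwise_disjoint _ _ hij := h.pairwise_disjoint (hf.ne hij)
  exists_adj _ _ hij := h.exists_adj _ _ (f.map_adj hij)

theorem HasMinorPattern.of_hom (h : HasMinorPattern G P) (f : Q →g P)
    (hf : Function.Injective f) : HasMinorPattern G Q := by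
  obtain ⟨B, hB⟩ := hasMinorPattern_iff.1 h
  exact hasMinorPattern_iff.2 ⟨_, hB.comp f hf⟩

theorem HasMinorPattern.of_le {P' : SimpleGraph W} (h : HasMinorPattern G P) (hle : P' ≤ P) :
    HasMinorPattern G P' :=
  h.of_hom (Hom.ofLE hle) Function.injective_id

theorem HasMinorPattern.trans (hGP : HasMinorPattern G P) (hPQ : HasMinorPattern P Q) :
    HasMinorPattern G Q := by
  obtain ⟨B, hB⟩ := hasMinorPattern_iff.1 hGP
  obtain ⟨C, hC⟩ := hasMinorPattern_iff.1 hPQ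
  refine hasMinorPattern_iff.2 ⟨fun k => ⋃ i ∈ C k, B i, ⟨fun k => ?_, fun k => ?_, ?_, ?_⟩⟩
  · obtain ⟨i, hi⟩ := hC.nonempty k
    exact (hB.nonempty i).mono (Set.subset_biUnion_of_mem hi)
  · exact induce_biUnion_connected hB.connected hB.exists_adj (hC.connected k)
  · intro k l hkl
    simp only [Set.disjoint_iUnion_left, Set.disjoint_iUnion_right]
    exact fun i hi j hj => hB.pairwise_disjoint ((hC.pairwise_disjoint hkl).ne_of_mem hj hi)
  · intro k l hkl
    obtain ⟨i, hi, j, hj, hij⟩ := hC.exists_adj k l hkl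
    obtain ⟨x, hx, y, hy, hxy⟩ := hB.exists_adj i j hij
    exact ⟨x, Set.mem_biUnion hi hx, y, Set.mem_biUnion hj hy, hxy⟩

end Minor

section SupEdge

variable {V : Type*} {G : SimpleGraph V} {u v : V}

theorem reachable_or_reachable_of_sup_edge {x : V} (h : (G ⊔ edge u v).Reachable u x) :
    G.Reachable u x ∨ G.Reachable v x := by
  obtain ⟨p⟩ := h
  suffices ∀ {y z} (q : (G ⊔ edge u v).Walk y z),
      G.Reachable u y ∨ G.Reachable v y → G.Reachable u z ∨ G.Reachable v z from
    this p (Or.inl .rfl)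
  intro y z q
  induction q with
  | nil => exact id
  | cons hyz _ ih =>
    refine fun hy => ih ?_
    rcases hyz with hyz | hyz
    · exact hy.imp (·.trans hyz.reachable) (·.trans hyz.reachable)
    · obtain ⟨⟨rfl, rfl⟩ | ⟨rfl, rfl⟩, -⟩ := (edge_adj _ _ _ _).1 hyz
      exacts [Or.inr .rfl, Or.inl .rfl]

theorem induce_sup_edge {S : Set V} (hu : u ∈ S) (hv : v ∈ S) :
    (G ⊔ edge u v).induce S = G.induce S ⊔ edge ⟨u, hu⟩ ⟨v, hv⟩ := by
  ext x y
  simp [edge_adj, Subtype.ext_iff]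

theorem induce_sup_edge_of_not_mem {S : Set V} (h : ¬(u ∈ S ∧ v ∈ S)) :
    (G ⊔ edge u v).induce S = G.induce S := by
  ext ⟨x, hx⟩ ⟨y, hy⟩
  simp only [comap_adj, Function.Embedding.subtype_apply, sup_adj, edge_adj, or_iff_left_iff_imp]
  rintro ⟨⟨rfl, rfl⟩ | ⟨rfl, rfl⟩, -⟩
  exacts [absurd ⟨hx, hy⟩ h, absurd ⟨hy, hx⟩ h]

end SupEdge

section SupEdgeModel

variable {V W : Type*} {G : SimpleGraph V} {P : SimpleGraph W} {u v : V} {B : W → Set V}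

theorem IsMinorModel.of_sup_edge (h : IsMinorModel (G ⊔ edge u v) P B) (hu : ∀ i, u ∉ B i) :
    IsMinorModel G P B where
  nonempty := h.nonempty
  connected i := induce_sup_edge_of_not_mem (fun h' => hu i h'.1) ▸ h.connected i
  pairwise_disjoint := h.pairwise_disjoint
  exists_adj i j hij := by
    obtain ⟨x, hx, y, hy, hxy | hxy⟩ := h.exists_adj i j hij
    · exact ⟨x, hx, y, hy, hxy⟩
    · obtain ⟨⟨rfl, -⟩ | ⟨-, rfl⟩, -⟩ := (edge_adj _ _ _ _).1 hxy
      exacts [absurd hx (hu i), absurd hy (hu j)]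

theorem IsMinorModel.deleteEdges_of_sup_edge {i j : W} (h : IsMinorModel (G ⊔ edge u v) P B)
    (hu : u ∈ B i) (hv : v ∈ B j) (hij : i ≠ j) :
    IsMinorModel G (P.deleteEdges {s(i, j)}) B where
  nonempty := h.nonempty
  connected k := by
    have hnot : ¬(u ∈ B k ∧ v ∈ B k) := fun huv =>
      hij ((h.eq_of_mem hu huv.1).trans (h.eq_of_mem huv.2 hv))
    exact induce_sup_edge_of_not_mem hnot ▸ h.connected k
  pairwise_disjoint := h.pairwise_disjoint
  exists_adj k l hkl := by
    obtain ⟨hkl, hne⟩ := deleteEdges_adj.1 hkl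
    obtain ⟨x, hx, y, hy, hxy | hxy⟩ := h.exists_adj k l hkl
    · exact ⟨x, hx, y, hy, hxy⟩
    · obtain ⟨⟨rfl, rfl⟩ | ⟨rfl, rfl⟩, -⟩ := (edge_adj _ _ _ _).1 hxy
      · simp [h.eq_of_mem hx hu, h.eq_of_mem hy hv] at hne
      · simp [h.eq_of_mem hx hv, h.eq_of_mem hy hu, Sym2.eq_swap] at hne

theorem IsMinorModel.exists_adj_of_sup_edge_of_mem {i : W} (h : IsMinorModel (G ⊔ edge u v) P B)
    (hu : u ∈ B i) (hv : v ∈ B i) (k l : W) (hkl : P.Adj k l) :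
    ∃ x ∈ B k, ∃ y ∈ B l, G.Adj x y := by
  obtain ⟨x, hx, y, hy, hxy | hxy⟩ := h.exists_adj k l hkl
  · exact ⟨x, hx, y, hy, hxy⟩
  · obtain ⟨⟨rfl, rfl⟩ | ⟨rfl, rfl⟩, -⟩ := (edge_adj _ _ _ _).1 hxy
    exacts [absurd ((h.eq_of_mem hx hu).trans (h.eq_of_mem hv hy)) hkl.ne,
      absurd ((h.eq_of_mem hx hv).trans (h.eq_of_mem hu hy)) hkl.ne]

theorem IsMinorModel.update_of_sup_edge [DecidableEq W] {i : W} {X : Set V}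
    (h : IsMinorModel (G ⊔ edge u v) P B) (hu : u ∈ B i) (hv : v ∈ B i) (hXB : X ⊆ B i)
    (hX : X.Nonempty) (hXc : (G.induce X).Connected) :
    IsMinorModel G (P.deleteEdges ((s(i, ·)) '' {k | P.Adj i k ∧ ¬∃ x ∈ X, ∃ y ∈ B k, G.Adj x y}))
      (Function.update B i X) := by
  have hle (k : W) : Function.update B i X k ⊆ B k := by
    rcases eq_or_ne k i with rfl | hk
    · simpa using hXB
    · simp [hk]
  refine ⟨fun k => ?_, fun k => ?_, fun k l hkl => (h.pairwise_disjoint hkl).mono (hle k) (hle l),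
    fun k l hkl => ?_⟩
  · rcases eq_or_ne k i with rfl | hk
    · simpa using hX
    · simpa [hk] using h.nonempty k
  · rcases eq_or_ne k i with rfl | hk
    · rw [Function.update_self]
      exact hXc
    · have hnot : ¬(u ∈ B k ∧ v ∈ B k) := fun huv => hk (h.eq_of_mem huv.1 hu)
      rw [Function.update_of_ne hk, ← induce_sup_edge_of_not_mem hnot]
      exact h.connected k
  · obtain ⟨hPkl, hne⟩ := deleteEdges_adj.1 hkl
    rcases eq_or_ne k i with rfl | hk
    · obtain ⟨x, hx, y, hy, hxy⟩ := not_not.1 fun hn => hne ⟨l, ⟨hPkl, hn⟩, rfl⟩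
      exact ⟨x, by simpa using hx, y, by simpa [hPkl.ne'] using hy, hxy⟩
    rcases eq_or_ne l i with rfl | hl
    · obtain ⟨x, hx, y, hy, hxy⟩ := not_not.1 fun hn => hne ⟨k, ⟨hPkl.symm, hn⟩, Sym2.eq_swap⟩
      exact ⟨y, by simpa [hk] using hy, x, by simpa using hx, hxy.symm⟩
    · simpa [hk, hl] using h.exists_adj_of_sup_edge_of_mem hu hv k l hPkl

end SupEdgeModel

section SupEdgeMinor

variable {V W : Type*} {G : SimpleGraph V} {P : SimpleGraph W} {u v : V}

theorem IsMinorModel.exists_deleteEdges_of_sup_edge_of_mem [P.LocallyFinite] {B : W → Set V}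
    {i : W} (hP : P.degree i ≤ 3) (h : IsMinorModel (G ⊔ edge u v) P B) (hu : u ∈ B i)
    (hv : v ∈ B i) : ∃ E : Set (Sym2 W), E.Subsingleton ∧ HasMinorPattern G (P.deleteEdges E) := by
  classical
  let comp (w : V) (hw : w ∈ B i) : Set V :=
    {x | ∃ hx : x ∈ B i, (G.induce (B i)).Reachable ⟨w, hw⟩ ⟨x, hx⟩}
  let missed (X : Set V) : Set W := {k | P.Adj i k ∧ ¬∃ x ∈ X, ∃ y ∈ B k, G.Adj x y}
  have hcover (x : V) (hx : x ∈ B i) : x ∈ comp u hu ∨ x ∈ comp v hv := by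
    have hreach := (h.connected i).preconnected ⟨u, hu⟩ ⟨x, hx⟩
    rw [induce_sup_edge hu hv] at hreach
    exact (reachable_or_reachable_of_sup_edge hreach).imp (⟨hx, ·⟩) (⟨hx, ·⟩)
  have hdisj : Disjoint (missed (comp u hu)) (missed (comp v hv)) := by
    refine Set.disjoint_left.2 fun k ⟨hik, hnu⟩ ⟨_, hnv⟩ => ?_
    obtain ⟨x, hx, y, hy, hxy⟩ := h.exists_adj_of_sup_edge_of_mem hu hv i k hik
    rcases hcover x hx with hxu | hxv
    exacts [hnu ⟨x, hxu, y, hy, hxy⟩, hnv ⟨x, hxv, y, hy, hxy⟩]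
  have hmissed (X : Set V) : missed X ⊆ P.neighborFinset i := fun k hk => by simpa using hk.1
  have hmodel (w : V) (hw : w ∈ B i) :
      HasMinorPattern G (P.deleteEdges ((s(i, ·)) '' missed (comp w hw))) :=
    hasMinorPattern_iff.2 ⟨_, h.update_of_sup_edge hu hv (fun _ hx => hx.1) ⟨w, hw, .rfl⟩
      (induce_setOf_reachable_connected hw)⟩
  rcases subsingleton_or_subsingleton_of_disjoint hdisj (hmissed _) (hmissed _) hP with hs | hs
  exacts [⟨_, hs.image _, hmodel u hu⟩, ⟨_, hs.image _, hmodel v hv⟩]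

theorem HasMinorPattern.exists_deleteEdges_of_sup_edge [P.LocallyFinite]
    (hP : ∀ i, P.degree i ≤ 3) (h : HasMinorPattern (G ⊔ edge u v) P) :
    ∃ E : Set (Sym2 W), E.Subsingleton ∧ HasMinorPattern G (P.deleteEdges E) := by
  obtain ⟨B, hB⟩ := hasMinorPattern_iff.1 h
  have of_not_mem {w w' : V} (hB : IsMinorModel (G ⊔ edge w w') P B) (hw : ∀ i, w ∉ B i) :
      ∃ E : Set (Sym2 W), E.Subsingleton ∧ HasMinorPattern G (P.deleteEdges E) :=
    ⟨∅, Set.subsingleton_empty, by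
      rw [deleteEdges_empty]
      exact hasMinorPattern_iff.2 ⟨B, hB.of_sup_edge hw⟩⟩
  rcases em (∃ i, u ∈ B i) with ⟨i, hi⟩ | hu
  · rcases em (∃ j, v ∈ B j) with ⟨j, hj⟩ | hv
    · rcases eq_or_ne i j with rfl | hij
      · exact hB.exists_deleteEdges_of_sup_edge_of_mem (hP i) hi hj
      · exact ⟨_, Set.subsingleton_singleton,
          hasMinorPattern_iff.2 ⟨B, hB.deleteEdges_of_sup_edge hi hj hij⟩⟩
    · exact of_not_mem (by rwa [edge_comm] at hB) (not_exists.1 hv)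
  · exact of_not_mem hB (not_exists.1 hu)

theorem HasMinorPattern.top_of_sup_edge {n : ℕ}
    (h : HasMinorPattern (G ⊔ edge u v) (⊤ : SimpleGraph (Fin (n + 1)))) :
    HasMinorPattern G (⊤ : SimpleGraph (Fin n)) := by
  obtain ⟨B, hB⟩ := hasMinorPattern_iff.1 h
  obtain ⟨i, hi⟩ : ∃ i, ∀ j, u ∈ B j → j = i := by
    by_cases hu : ∃ i, u ∈ B i
    · obtain ⟨i, hi⟩ := hu
      exact ⟨i, fun j hj => hB.eq_of_mem hj hi⟩
    · exact ⟨0, fun j hj => absurd ⟨j, hj⟩ hu⟩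
  let f := Embedding.completeGraph (Fin.succAboveEmb i)
  exact hasMinorPattern_iff.2
    ⟨_, (hB.comp f.toHom f.injective).of_sup_edge fun k hk => Fin.succAbove_ne i k (hi _ hk)⟩

end SupEdgeMinor

section CompleteBipartite

theorem hasMinorPattern_deleteEdges_completeBipartiteGraph (a b : Fin 3) :
    HasMinorPattern ((completeBipartiteGraph (Fin 3) (Fin 3)).deleteEdges {s(.inl a, .inr b)})
      (⊤ : SimpleGraph (Fin 4)) := by
  have hne : ∀ c : Fin 3, c + 1 ≠ c ∧ c + 2 ≠ c ∧ c + 1 ≠ c + 2 ∧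
      c ≠ c + 1 ∧ c ≠ c + 2 ∧ c + 2 ≠ c + 1 := by decide
  refine ⟨![{.inl a, .inr (b + 1)}, {.inl (a + 1), .inr b}, {.inl (a + 2)}, {.inr (b + 2)}],
    fun k => ?_, fun k => ?_, fun k l hkl => ?_, fun k l hkl => ?_⟩
  · fin_cases k <;> simp
  · fin_cases k <;> first | exact induce_pair_connected_of_adj (by simp_all) | simp
  all_goals fin_cases k <;> fin_cases l <;> simp_all

theorem degree_completeBipartiteGraph_le
    [DecidableRel (completeBipartiteGraph (Fin 3) (Fin 3)).Adj] (i : Fin 3 ⊕ Fin 3) :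
    (completeBipartiteGraph (Fin 3) (Fin 3)).degree i ≤ 3 := by
  rw [← card_neighborFinset_eq_degree]
  rcases i with a | b
  · refine (Finset.card_le_card (t := Finset.univ.map .inr) fun x hx => ?_).trans (by simp)
    rcases x with x | x <;> simp_all
  · refine (Finset.card_le_card (t := Finset.univ.map .inl) fun x hx => ?_).trans (by simp)
    rcases x with x | x <;> simp_all

theorem exists_deleteEdges_le_completeBipartiteGraph {E : Set (Sym2 (Fin 3 ⊕ Fin 3))}
    (hE : E.Subsingleton) : ∃ a b : Fin 3,
      (completeBipartiteGraph (Fin 3) (Fin 3)).deleteEdges {s(.inl a, .inr b)} ≤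
        (completeBipartiteGraph (Fin 3) (Fin 3)).deleteEdges E := by
  rw [deleteEdges_eq_inter_edgeSet E]
  rcases (hE.anti Set.inter_subset_left).eq_empty_or_singleton with he | ⟨e, he⟩
  · exact ⟨0, 0, he ▸ deleteEdges_anti (Set.empty_subset _)⟩
  have hadj : e ∈ (completeBipartiteGraph (Fin 3) (Fin 3)).edgeSet :=
    (show e ∈ E ∩ _ by rw [he]; rfl).2
  induction e using Sym2.ind with
  | h x y =>
    rcases x with a | b <;> rcases y with a' | b' <;> simp at hadj
    · exact ⟨a, b', he ▸ le_rfl⟩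
    · exact ⟨a', b, by rw [he, Sym2.eq_swap]⟩

theorem HasMinorPattern.top_of_sup_edge_completeBipartiteGraph {V : Type*} {G : SimpleGraph V}
    {u v : V} (h : HasMinorPattern (G ⊔ edge u v) (completeBipartiteGraph (Fin 3) (Fin 3))) :
    HasMinorPattern G (⊤ : SimpleGraph (Fin 4)) := by
  classical
  obtain ⟨E, hE, hG⟩ := h.exists_deleteEdges_of_sup_edge degree_completeBipartiteGraph_le
  obtain ⟨a, b, hle⟩ := exists_deleteEdges_le_completeBipartiteGraph hE
  exact (hG.of_le hle).trans (hasMinorPattern_deleteEdges_completeBipartiteGraph a b)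

end CompleteBipartite

theorem stmt8_general {V : Type*} (G : SimpleGraph V) (hsp : SeriesParallel G)
    (u v : V) :
    PlanarByMinors (G ⊔ SimpleGraph.fromEdgeSet {s(u, v)}) :=
  ⟨fun h => hsp h.top_of_sup_edge, fun h => hsp h.top_of_sup_edge_completeBipartiteGraph⟩

/-- Adding any single edge to a series-parallel graph yields a planar graph:
the result has neither a `K₅` minor nor a `K₃,₃` minor. -/
theorem stmt8 {V : Type*} (G : SimpleGraph V) (hsp : SeriesParallel G)
    (u v : V) (huv : u ≠ v) :
    PlanarByMinors (G ⊔ SimpleGraph.fromEdgeSet {s(u, v)}) :=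
  stmt8_general G hsp u v
end

section
/- Pushing a demand preserves the cut condition locally: in a multiflow instance satisfying the cut condition, if every path used by some fractional solution to route a demand d=(u,v) passes through a common vertex w, then every cut separating {u,v} from w has surplus at least 2; consequently replacing one unit of demand d by unit demands (u,w) and (w,v) keeps the cut condition. -/
open Finset

/-- `cutSurplus c D X` : total capacity minus total demand crossing `δ(X)`. -/
def cutSurplus {V : Type*} [Fintype V] [DecidableEq V] (c D : V → V → ℝ)
    (X : Finset V) : ℝ :=
  ∑ x ∈ X, ∑ y ∈ Xᶜ, (c x y - D x y)

/-!
Weight every path of the fractional solution by the number of edges of `δ(C)` it uses. Summed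
over all paths, this weighted flow is at most the capacity of `δ(C)`. Every demand separated by
`C` contributes at least its value to it, since each of its paths crosses `δ(C)`. If `C`
separates `w` from `u` and `v`, the demand `(u, v)` is not separated, yet each of its paths goes
through `w` and, using no edge twice, crosses `δ(C)` at least twice; this adds `2 D(u, v) ≥ 2`
on top of the separated demand, so `σ(C) ≥ 2`. Pushing a unit of `(u, v)` to `w` changes `σ(C)`
by `[C separates u, v] - [C separates u, w] - [C separates w, v]`, which is `-2` exactly for
those cuts and `0` for all others.
-/

namespace SimpleGraph.Walk

variable {V : Type*} [Fintype V] [DecidableEq V] {G : SimpleGraph V}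

def cutEdgeCount (C : Finset V) {x y : V} (W : G.Walk x y) : ℕ :=
  #{q ∈ C ×ˢ Cᶜ | s(q.1, q.2) ∈ W.edges}

lemma exists_cut_edge (C : Finset V) {x y : V} (W : G.Walk x y) (h : Xor (x ∈ C) (y ∈ C)) :
    ∃ q ∈ C ×ˢ Cᶜ, s(q.1, q.2) ∈ W.edges := by
  have key : ∀ {a b : V} (W : G.Walk a b), a ∈ C → b ∉ C →
      ∃ q ∈ C ×ˢ Cᶜ, s(q.1, q.2) ∈ W.edges := fun W ha hb => by
    obtain ⟨d, hd, hd₁, hd₂⟩ := W.exists_boundary_dart (C : Set V) ha hb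
    exact ⟨(d.fst, d.snd), mem_product.2 ⟨hd₁, mem_compl.2 hd₂⟩,
      W.edges_eq_map_darts ▸ List.mem_map_of_mem hd⟩
  rcases h with ⟨hx, hy⟩ | ⟨hy, hx⟩
  · exact key W hx hy
  · simpa [edges_reverse] using key W.reverse hy hx

lemma one_le_cutEdgeCount (C : Finset V) {x y : V} (W : G.Walk x y)
    (h : Xor (x ∈ C) (y ∈ C)) : 1 ≤ W.cutEdgeCount C := by
  obtain ⟨q, hq, hqW⟩ := W.exists_cut_edge C h
  exact card_pos.2 ⟨q, mem_filter.2 ⟨hq, hqW⟩⟩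

lemma IsTrail.two_le_cutEdgeCount {C : Finset V} {x y w : V} {W : G.Walk x y}
    (hW : W.IsTrail) (hw : w ∈ W.support)
    (hxw : Xor (x ∈ C) (w ∈ C)) (hwy : Xor (w ∈ C) (y ∈ C)) : 2 ≤ W.cutEdgeCount C := by
  have hsplit := congrArg edges (W.take_spec hw)
  rw [edges_append] at hsplit
  have hdisj := List.disjoint_of_nodup_append (hsplit ▸ hW.edges_nodup)
  obtain ⟨q₁, hq₁, hq₁W⟩ := (W.takeUntil w hw).exists_cut_edge C hxw
  obtain ⟨q₂, hq₂, hq₂W⟩ := (W.dropUntil w hw).exists_cut_edge C hwy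
  refine one_lt_card.2 ⟨q₁, mem_filter.2 ⟨hq₁, ?_⟩, q₂, mem_filter.2 ⟨hq₂, ?_⟩, ?_⟩
  · exact hsplit ▸ List.mem_append_left _ hq₁W
  · exact hsplit ▸ List.mem_append_right _ hq₂W
  · rintro rfl
    exact hdisj hq₁W hq₂W

end SimpleGraph.Walk

lemma mul_sum_le_sum_mul_of_ne_zero {ι : Type*} (s : Finset ι) {f g : ι → ℝ} {k : ℝ}
    (hf : ∀ i ∈ s, 0 ≤ f i) (hg : ∀ i ∈ s, f i ≠ 0 → k ≤ g i) :
    k * ∑ i ∈ s, f i ≤ ∑ i ∈ s, f i * g i := by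
  rw [mul_sum]
  refine sum_le_sum fun i hi => ?_
  rcases eq_or_ne (f i) 0 with h | h
  · simp [h]
  · rw [mul_comm]
    exact mul_le_mul_of_nonneg_left (hg i hi h) (hf i hi)

section Cut

variable {V : Type*} [Fintype V] [DecidableEq V]

lemma sum_cut_add_pair_le_sum_sum {F : V → V → ℝ} (hF : ∀ a b, 0 ≤ F a b) (C : Finset V)
    {u v : V} (huv : u ≠ v) (hside : u ∈ C ↔ v ∈ C) :
    ∑ a ∈ C, ∑ b ∈ Cᶜ, (F a b + F b a) + (F u v + F v u) ≤ ∑ a, ∑ b, F a b := by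
  have hsplit : ∀ a, ∑ b, F a b = ∑ b ∈ C, F a b + ∑ b ∈ Cᶜ, F a b :=
    fun a => (sum_add_sum_compl C _).symm
  have quadrants : ∑ a, ∑ b, F a b = ∑ a ∈ C, ∑ b ∈ Cᶜ, (F a b + F b a) +
      (∑ a ∈ C, ∑ b ∈ C, F a b + ∑ a ∈ Cᶜ, ∑ b ∈ Cᶜ, F a b) := by
    rw [← sum_add_sum_compl C]
    simp only [hsplit, sum_add_distrib, sum_comm (s := Cᶜ) (t := C)]
    ring
  have pair : ∀ s : Finset V, u ∈ s → v ∈ s → F u v + F v u ≤ ∑ a ∈ s, ∑ b ∈ s, F a b := by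
    intro s hu hv
    calc F u v + F v u = ∑ q ∈ {(u, v), (v, u)}, F q.1 q.2 :=
          (sum_pair (f := fun q : V × V => F q.1 q.2) (a := (u, v)) (b := (v, u))
            (by simp [huv])).symm
      _ ≤ ∑ q ∈ s ×ˢ s, F q.1 q.2 :=
        sum_le_sum_of_subset_of_nonneg (by simp [insert_subset_iff, hu, hv]) fun q _ _ => hF _ _
      _ = ∑ a ∈ s, ∑ b ∈ s, F a b := sum_product ..
  have hdiag : ∀ s : Finset V, 0 ≤ ∑ a ∈ s, ∑ b ∈ s, F a b :=
    fun s => sum_nonneg fun a _ => sum_nonneg fun b _ => hF a b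
  rw [quadrants]
  by_cases hu : u ∈ C
  · linarith [pair C hu (hside.1 hu), hdiag Cᶜ]
  · linarith [pair Cᶜ (mem_compl.2 hu) (mem_compl.2 (mt hside.2 hu)), hdiag C]

lemma sum_cut_ite_sym2_eq_ite_xor (C : Finset V) (a b : V) :
    ∑ x ∈ C, ∑ y ∈ Cᶜ, (if s(x, y) = s(a, b) then (1 : ℝ) else 0) =
      if Xor (a ∈ C) (b ∈ C) then 1 else 0 := by
  have h : ∀ x ∈ C, ∀ y ∈ Cᶜ, (if s(x, y) = s(a, b) then (1 : ℝ) else 0) =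
      (if x = a then (if y = b then 1 else 0) else 0) +
        (if x = b then (if y = a then 1 else 0) else 0) := by
    intro x hx y hy
    rw [mem_compl] at hy
    by_cases hxa : x = a <;> by_cases hyb : y = b <;> by_cases hxb : x = b <;>
      by_cases hya : y = a <;> simp_all
  rw [sum_congr rfl fun x hx => sum_congr rfl (h x hx)]
  simp only [sum_add_distrib]
  by_cases ha : a ∈ C <;> by_cases hb : b ∈ C <;> simp [ha, hb, Xor]

def pushDemand (D : V → V → ℝ) (u v w : V) : V → V → ℝ :=
  fun x y => D x y - (if s(x, y) = s(u, v) then 1 else 0)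
    + (if s(x, y) = s(u, w) then 1 else 0)
    + (if s(x, y) = s(w, v) then 1 else 0)

lemma cutSurplus_pushDemand_nonneg {c D : V → V → ℝ} {u v w : V} {C : Finset V}
    (hC : 0 ≤ cutSurplus c D C)
    (hsep : Xor (u ∈ C) (w ∈ C) → Xor (w ∈ C) (v ∈ C) → 2 ≤ cutSurplus c D C) :
    0 ≤ cutSurplus c (pushDemand D u v w) C := by
  have hchange : cutSurplus c (pushDemand D u v w) C = cutSurplus c D C
      + (if Xor (u ∈ C) (v ∈ C) then 1 else 0) - (if Xor (u ∈ C) (w ∈ C) then 1 else 0)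
      - (if Xor (w ∈ C) (v ∈ C) then 1 else 0) := by
    simp only [cutSurplus, pushDemand, ← sum_cut_ite_sym2_eq_ite_xor, ← sum_add_distrib,
      ← sum_sub_distrib]
    exact sum_congr rfl fun _ _ => sum_congr rfl fun _ _ => by ring
  rw [hchange]
  by_cases hu : u ∈ C <;> by_cases hv : v ∈ C <;> by_cases hw : w ∈ C <;>
    simp only [Xor, hu, hv, hw] at hsep ⊢ <;> norm_num at hsep ⊢ <;> linarith

end Cut

section Flow

variable {V : Type*} [Fintype V] [DecidableEq V] {G : SimpleGraph V} [DecidableRel G.Adj]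
  (f : ∀ a b : V, G.Path a b → ℝ) (C : Finset V)

noncomputable def crossingFlow (x y : V) : ℝ :=
  ∑ p : G.Path x y, f x y p * (p : G.Walk x y).cutEdgeCount C

lemma sum_sum_crossingFlow :
    ∑ x, ∑ y, crossingFlow f C x y = ∑ a ∈ C, ∑ b ∈ Cᶜ, ∑ x, ∑ y, ∑ p : G.Path x y,
      if s(a, b) ∈ (p : G.Walk x y).edges then f x y p else 0 := by
  simp only [crossingFlow, SimpleGraph.Walk.cutEdgeCount, natCast_card_filter, mul_sum, mul_ite,
    mul_one, mul_zero]
  calc _ = ∑ x, ∑ y, ∑ q ∈ C ×ˢ Cᶜ, ∑ p : G.Path x y,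
        if s(q.1, q.2) ∈ (p : G.Walk x y).edges then f x y p else 0 :=
        sum_congr rfl fun x _ => sum_congr rfl fun y _ => sum_comm
    _ = ∑ x, ∑ q ∈ C ×ˢ Cᶜ, ∑ y, ∑ p : G.Path x y,
        if s(q.1, q.2) ∈ (p : G.Walk x y).edges then f x y p else 0 :=
        sum_congr rfl fun x _ => sum_comm
    _ = _ := by rw [sum_comm, sum_product]

variable {f}

lemma sum_sum_crossingFlow_le {c : V → V → ℝ} (hc0 : ∀ x y, 0 ≤ c x y)
    (hfeas : ∀ a b : V, G.Adj a b →
      (∑ x : V, ∑ y : V, ∑ p : G.Path x y,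
        if s(a, b) ∈ (p : G.Walk x y).edges then f x y p else 0) ≤ c a b) :
    ∑ x, ∑ y, crossingFlow f C x y ≤ ∑ a ∈ C, ∑ b ∈ Cᶜ, c a b := by
  rw [sum_sum_crossingFlow]
  refine sum_le_sum fun a _ => sum_le_sum fun b _ => ?_
  by_cases hab : G.Adj a b
  · exact hfeas a b hab
  · have hunused : ∀ x y (p : G.Path x y), s(a, b) ∉ (p : G.Walk x y).edges :=
      fun x y p h => hab ((p : G.Walk x y).adj_of_mem_edges h)
    simpa [hunused] using hc0 a b

variable {C}

lemma sum_le_crossingFlow (hf0 : ∀ a b p, 0 ≤ f a b p) {x y : V} (hxy : Xor (x ∈ C) (y ∈ C)) :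
    ∑ p : G.Path x y, f x y p ≤ crossingFlow f C x y := by
  simpa [crossingFlow] using mul_sum_le_sum_mul_of_ne_zero (k := 1) univ (fun p _ => hf0 x y p)
    fun p _ _ => mod_cast (p : G.Walk x y).one_le_cutEdgeCount C hxy

lemma two_mul_sum_le_crossingFlow (hf0 : ∀ a b p, 0 ≤ f a b p) {x y w : V}
    (hthrough : ∀ p : G.Path x y, f x y p ≠ 0 → w ∈ (p : G.Walk x y).support)
    (hxw : Xor (x ∈ C) (w ∈ C)) (hwy : Xor (w ∈ C) (y ∈ C)) :
    2 * ∑ p : G.Path x y, f x y p ≤ crossingFlow f C x y :=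
  mul_sum_le_sum_mul_of_ne_zero univ (fun p _ => hf0 x y p) fun p _ hp =>
    mod_cast p.property.isTrail.two_le_cutEdgeCount (hthrough p hp) hxw hwy

end Flow

lemma two_le_cutSurplus_of_separates {V : Type*} [Fintype V] [DecidableEq V]
    {G : SimpleGraph V} [DecidableRel G.Adj] {c D : V → V → ℝ} (hc0 : ∀ x y, 0 ≤ c x y)
    {f : ∀ a b : V, G.Path a b → ℝ} (hf0 : ∀ a b p, 0 ≤ f a b p)
    (hfeas : ∀ a b : V, G.Adj a b →
      (∑ x : V, ∑ y : V, ∑ p : G.Path x y,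
        if s(a, b) ∈ (p : G.Walk x y).edges then f x y p else 0) ≤ c a b)
    (hsat : ∀ a b : V, a ≠ b →
      D a b ≤ (∑ p : G.Path a b, f a b p) + (∑ p : G.Path b a, f b a p))
    {u v w : V} (huv : u ≠ v) (hDuv : 1 ≤ D u v)
    (hthrough : ∀ p : G.Path u v, f u v p ≠ 0 → w ∈ (p : G.Walk u v).support)
    (hthrough' : ∀ p : G.Path v u, f v u p ≠ 0 → w ∈ (p : G.Walk v u).support)
    {C : Finset V} (huw : Xor (u ∈ C) (w ∈ C)) (hwv : Xor (w ∈ C) (v ∈ C)) :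
    2 ≤ cutSurplus c D C := by
  have hcross : ∀ a ∈ C, ∀ b ∈ Cᶜ, D a b ≤ crossingFlow f C a b + crossingFlow f C b a := by
    intro a ha b hb
    have hab : Xor (a ∈ C) (b ∈ C) := Or.inl ⟨ha, mem_compl.1 hb⟩
    linarith [hsat a b (ne_of_mem_of_not_mem ha (mem_compl.1 hb)), sum_le_crossingFlow hf0 hab,
      sum_le_crossingFlow hf0 (Or.symm hab)]
  have hthroughw : 2 * D u v ≤ crossingFlow f C u v + crossingFlow f C v u := by
    linarith [hsat u v huv, two_mul_sum_le_crossingFlow hf0 hthrough huw hwv,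
      two_mul_sum_le_crossingFlow hf0 hthrough' (Or.symm hwv) (Or.symm huw)]
  have hside : u ∈ C ↔ v ∈ C := by unfold Xor at huw hwv; tauto
  have hnonneg : ∀ a b, 0 ≤ crossingFlow f C a b := fun a b =>
    sum_nonneg fun p _ => mul_nonneg (hf0 a b p) (Nat.cast_nonneg _)
  have hdemand : ∑ a ∈ C, ∑ b ∈ Cᶜ, D a b ≤
      ∑ a ∈ C, ∑ b ∈ Cᶜ, (crossingFlow f C a b + crossingFlow f C b a) :=
    sum_le_sum fun a ha => sum_le_sum fun b hb => hcross a ha b hb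
  have hcap := sum_sum_crossingFlow_le C hc0 hfeas
  have htotal := sum_cut_add_pair_le_sum_sum hnonneg C huv hside
  simp only [cutSurplus, sum_sub_distrib]
  linarith

theorem stmt13_general {V : Type*} [Fintype V] [DecidableEq V]
    (G : SimpleGraph V) [DecidableRel G.Adj]
    (c D : V → V → ℝ)
    (hc0 : ∀ x y, 0 ≤ c x y)
    (hcut : ∀ C : Finset V, 0 ≤ cutSurplus c D C)
    (u v w : V) (huv : u ≠ v) (hDuv : 1 ≤ D u v)
    -- a fractional solution `f` :
    (f : ∀ a b : V, G.Path a b → ℝ)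
    (hf0 : ∀ a b p, 0 ≤ f a b p)
    (hfeas : ∀ a b : V, G.Adj a b →
      (∑ x : V, ∑ y : V, ∑ p : G.Path x y,
        if s(a, b) ∈ (p : G.Walk x y).edges then f x y p else 0) ≤ c a b)
    (hsat : ∀ a b : V, a ≠ b →
      D a b ≤ (∑ p : G.Path a b, f a b p) + (∑ p : G.Path b a, f b a p))
    -- every path used to route the demand `(u,v)` passes through `w` :
    (hthrough : ∀ p : G.Path u v, f u v p ≠ 0 → w ∈ (p : G.Walk u v).support)
    (hthrough' : ∀ p : G.Path v u, f v u p ≠ 0 → w ∈ (p : G.Walk v u).support) :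
    (∀ C : Finset V,
      ((w ∈ C ∧ u ∉ C ∧ v ∉ C) ∨ (w ∉ C ∧ u ∈ C ∧ v ∈ C)) →
      2 ≤ cutSurplus c D C) ∧
    (∀ C : Finset V, 0 ≤ cutSurplus c
      (fun x y => D x y - (if s(x, y) = s(u, v) then 1 else 0)
        + (if s(x, y) = s(u, w) then 1 else 0)
        + (if s(x, y) = s(w, v) then 1 else 0)) C) := by
  have hsep : ∀ C : Finset V, Xor (u ∈ C) (w ∈ C) → Xor (w ∈ C) (v ∈ C) →
      2 ≤ cutSurplus c D C := fun C =>
    two_le_cutSurplus_of_separates hc0 hf0 hfeas hsat huv hDuv hthrough hthrough'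
  refine ⟨fun C hC => hsep C (by unfold Xor; tauto) (by unfold Xor; tauto), fun C => ?_⟩
  exact cutSurplus_pushDemand_nonneg (hcut C) (hsep C)

/-- Pushing a unit of the demand `d = (u,v)` to `w` preserves the cut
condition: if a fractional solution routes all demands and every path it
uses for `d` passes through `w`, then every cut separating `{u,v}` from `w`
has surplus at least `2`; consequently, decreasing the demand `(u,v)` by one
unit and adding unit demands `(u,w)` and `(w,v)` keeps the cut condition. -/
theorem stmt13 {V : Type*} [Fintype V] [DecidableEq V]
    (G : SimpleGraph V) [DecidableRel G.Adj]
    (c D : V → V → ℝ)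
    (hc : ∀ x y, c x y = c y x) (hD : ∀ x y, D x y = D y x)
    (hc0 : ∀ x y, 0 ≤ c x y) (hD0 : ∀ x y, 0 ≤ D x y)
    (hcut : ∀ C : Finset V, 0 ≤ cutSurplus c D C)
    (u v w : V) (huv : u ≠ v) (hDuv : 1 ≤ D u v)
    -- a fractional solution `f` :
    (f : ∀ a b : V, G.Path a b → ℝ)
    (hf0 : ∀ a b p, 0 ≤ f a b p)
    (hfeas : ∀ a b : V, G.Adj a b →
      (∑ x : V, ∑ y : V, ∑ p : G.Path x y,
        if s(a, b) ∈ (p : G.Walk x y).edges then f x y p else 0) ≤ c a b)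
    (hsat : ∀ a b : V, a ≠ b →
      D a b ≤ (∑ p : G.Path a b, f a b p) + (∑ p : G.Path b a, f b a p))
    -- every path used to route the demand `(u,v)` passes through `w` :
    (hthrough : ∀ p : G.Path u v, f u v p ≠ 0 → w ∈ (p : G.Walk u v).support)
    (hthrough' : ∀ p : G.Path v u, f v u p ≠ 0 → w ∈ (p : G.Walk v u).support) :
    (∀ C : Finset V,
      ((w ∈ C ∧ u ∉ C ∧ v ∉ C) ∨ (w ∉ C ∧ u ∈ C ∧ v ∈ C)) →
      2 ≤ cutSurplus c D C) ∧
    (∀ C : Finset V, 0 ≤ cutSurplus c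
      (fun x y => D x y - (if s(x, y) = s(u, v) then 1 else 0)
        + (if s(x, y) = s(u, w) then 1 else 0)
        + (if s(x, y) = s(w, v) then 1 else 0)) C) :=
  stmt13_general G c D hc0 hcut u v w huv hDuv f hf0 hfeas hsat hthrough hthrough'
end

section
/- In a series-parallel graph in which a pair (a,b) of vertices is joined by three internally vertex-disjoint paths, every path between internal vertices of two different ones of these three paths must pass through a or b; in particular {a,b} is a 2-vertex-cut separating the interiors of the three paths from each other. -/
/-!
If a path `q` joined the interiors of two of the three paths while avoiding `a` and `b`, one could
cut from it a walk `r` that leaves the interior of one path `Pᵢ` and steps into the interior of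
another path `Pⱼ` without meeting any of the three paths in between. Then `{b}`, the third path
minus `b`, the interior of `Pᵢ` together with `r`, and the interior of `Pⱼ` are connected, pairwise
disjoint and pairwise adjacent branch sets: a `K₄` minor.
-/

open Function SimpleGraph

theorem hasMinorPattern_top_of_lt {V W : Type*} [LinearOrder W] {G : SimpleGraph V}
    {B : W → Set V} (hconn : ∀ i, (G.induce (B i)).Connected)
    (hdisj : ∀ ⦃i j⦄, i < j → Disjoint (B i) (B j))
    (hadj : ∀ ⦃i j⦄, i < j → ∃ u ∈ B i, ∃ v ∈ B j, G.Adj u v) :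
    HasMinorPattern G (⊤ : SimpleGraph W) := by
  refine ⟨B, fun i => (hconn i).nonempty.elim fun v => ⟨v, v.2⟩, hconn,
    (pairwise_disjoint_on B).2 hdisj, fun i j hij => ?_⟩
  rcases (SimpleGraph.top_adj i j).1 hij |>.lt_or_gt with h | h
  · exact hadj h
  · obtain ⟨u, hu, v, hv, huv⟩ := hadj h
    exact ⟨v, hv, u, hu, huv.symm⟩

namespace SimpleGraph.Walk

variable {V : Type*} {G : SimpleGraph V} {u v : V}

def interior (p : G.Walk u v) : Set V := {w | w ∈ p.support ∧ w ≠ u ∧ w ≠ v}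

lemma IsPath.exists_adj_support_eq_diff {p : G.Walk u v} (hp : p.IsPath) (huv : u ≠ v) :
    ∃ e, ∃ t : G.Walk u e, t.IsPath ∧ G.Adj e v ∧
      {w | w ∈ t.support} = {w | w ∈ p.support} \ {v} := by
  have hnil : ¬p.Nil := fun h => huv h.eq
  refine ⟨_, p.dropLast, hp.dropLast, p.adj_penultimate hnil, ?_⟩
  have hsupp := support_dropLast_concat hnil
  have hv : v ∉ p.dropLast.support := by
    have hnodup := hp.support_nodup
    rw [← hsupp, List.nodup_append] at hnodup
    exact fun h => hnodup.2.2 v h v (List.mem_singleton_self v) rfl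
  ext w
  rw [Set.mem_sdiff, Set.mem_singleton_iff, Set.mem_ofPred, Set.mem_ofPred, ← hsupp,
    List.mem_append, List.mem_singleton]
  exact ⟨fun hw => ⟨Or.inl hw, by rintro rfl; exact hv hw⟩, fun ⟨hw, hwv⟩ => hw.resolve_right hwv⟩

lemma IsPath.ne_of_mem_support {p : G.Walk u v} (hp : p.IsPath) {w : V} (hw : w ∈ p.support)
    (hwu : w ≠ u) : u ≠ v := by
  rintro rfl
  rw [nil_iff_support_eq.1 (isPath_iff_nil.1 hp), List.mem_singleton] at hw
  exact hwu hw

lemma IsPath.exists_adj_support_eq_interior {p : G.Walk u v} (hp : p.IsPath)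
    (h : p.interior.Nonempty) :
    ∃ c e, ∃ t : G.Walk c e, G.Adj u c ∧ G.Adj e v ∧ {w | w ∈ t.support} = p.interior := by
  obtain ⟨x, hx, hxu, hxv⟩ := h
  obtain ⟨e, t, ht, hev, hts⟩ := hp.exists_adj_support_eq_diff (hp.ne_of_mem_support hx hxu)
  have hxt : x ∈ t.support := by
    change x ∈ {w | w ∈ t.support}
    rw [hts]
    exact ⟨hx, hxv⟩
  obtain ⟨c, t', -, hcu, hts'⟩ :=
    ht.reverse.exists_adj_support_eq_diff (ht.ne_of_mem_support hxt hxu).symm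
  refine ⟨c, e, t'.reverse, hcu.symm, hev, ?_⟩
  ext w
  have hw' := congrArg (w ∈ ·) hts'
  have hw := congrArg (w ∈ ·) hts
  simp only [Set.mem_ofPred, Set.mem_sdiff, Set.mem_singleton_iff, support_reverse,
    List.mem_reverse, eq_iff_iff] at hw hw' ⊢
  rw [hw', hw, interior, Set.mem_ofPred]
  tauto

section Parts

variable {ι : Type*} {S : ι → Set V}

-- `r` is the stretch travelled since the walk last left a part, namely `S i`.
lemma exists_adj_walk_between_parts_of_prefix (hS : Pairwise (Disjoint on S)) {j : ι} {y : V}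
    (hy : y ∈ S j) (q : G.Walk u y) {i : ι} {x : V} (r : G.Walk x u) (hij : i ≠ j)
    (hx : x ∈ S i) (hr : ∀ w ∈ r.support, w ≠ x → ∀ k, w ∉ S k) :
    ∃ i' j' x' z y', ∃ r' : G.Walk x' z, i' ≠ j' ∧ x' ∈ S i' ∧ y' ∈ S j' ∧ G.Adj z y' ∧
      r'.support ⊆ r.support ++ q.support ∧ ∀ w ∈ r'.support, w ≠ x' → ∀ k, w ∉ S k := by
  induction q generalizing i x with
  | @nil y =>
    by_cases hyx : y = x
    · exact absurd hy (Set.disjoint_left.1 (hS hij) (hyx ▸ hx))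
    · exact absurd hy (hr y r.end_mem_support hyx j)
  | @cons u w y h q ih =>
    by_cases hw : ∃ k, w ∈ S k
    · obtain ⟨k, hk⟩ := hw
      by_cases hki : k = i
      · subst hki
        obtain ⟨i', j', x', z, y', r', hij', hx', hy', hzy, hsub, hr'⟩ :=
          ih hy nil hij hk (by simp)
        refine ⟨i', j', x', z, y', r', hij', hx', hy', hzy, List.Subset.trans hsub ?_, hr'⟩
        have hw := q.start_mem_support
        intro v
        simp only [support_nil, support_cons, List.singleton_append, List.mem_cons,
          List.mem_append]
        grind
      · exact ⟨i, k, x, u, w, r, Ne.symm hki, hx, hk, h, List.subset_append_left _ _, hr⟩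
    · simp only [not_exists] at hw
      have hr' : ∀ v ∈ (r.concat h).support, v ≠ x → ∀ k, v ∉ S k := by
        intro v hv hvx
        rw [support_concat, List.mem_append, List.mem_singleton] at hv
        rcases hv with hv | rfl
        · exact hr v hv hvx
        · exact hw
      obtain ⟨i', j', x', z, y', r', hij', hx', hy', hzy, hsub, hr₂⟩ :=
        ih hy (r.concat h) hij hx hr'
      refine ⟨i', j', x', z, y', r', hij', hx', hy', hzy, List.Subset.trans hsub ?_, hr₂⟩
      have hw := q.start_mem_support
      intro v
      simp only [support_concat, support_cons, List.mem_append, List.mem_cons]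
      grind

theorem exists_adj_walk_between_parts (hS : Pairwise (Disjoint on S)) {i j : ι} (hij : i ≠ j)
    {x y : V} (hx : x ∈ S i) (hy : y ∈ S j) (q : G.Walk x y) :
    ∃ i' j' x' z y', ∃ r : G.Walk x' z, i' ≠ j' ∧ x' ∈ S i' ∧ y' ∈ S j' ∧ G.Adj z y' ∧
      r.support ⊆ q.support ∧ ∀ w ∈ r.support, w ≠ x' → ∀ k, w ∉ S k := by
  obtain ⟨i', j', x', z, y', r, hij', hx', hy', hzy, hsub, hr⟩ :=
    exists_adj_walk_between_parts_of_prefix hS hy q nil hij hx (by simp)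
  refine ⟨i', j', x', z, y', r, hij', hx', hy', hzy, fun w hw => ?_, hr⟩
  rcases List.mem_cons.1 (hsub hw) with rfl | h
  exacts [q.start_mem_support, h]

end Parts

end SimpleGraph.Walk

open SimpleGraph

theorem hasMinorPattern_top_of_theta_bridge {V : Type*} {G : SimpleGraph V} {a b x y z : V}
    (hab : a ≠ b) {p₁ p₂ p₃ : G.Walk a b} (hp₁ : p₁.IsPath) (hp₂ : p₂.IsPath) (hp₃ : p₃.IsPath)
    (h₁₂ : Disjoint p₁.interior p₂.interior) (h₁₃ : Disjoint p₁.interior p₃.interior)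
    (h₂₃ : Disjoint p₂.interior p₃.interior) (hx : x ∈ p₁.interior) (hy : y ∈ p₂.interior)
    (r : G.Walk x z) (hzy : G.Adj z y) (ha : a ∉ r.support) (hb : b ∉ r.support)
    (hr : ∀ w ∈ r.support, w ≠ x → w ∉ p₂.interior ∧ w ∉ p₃.interior) :
    HasMinorPattern G (⊤ : SimpleGraph (Fin 4)) := by
  obtain ⟨c₁, e₁, t₁, hac₁, he₁b, ht₁⟩ := hp₁.exists_adj_support_eq_interior ⟨x, hx⟩
  obtain ⟨c₂, e₂, t₂, hac₂, he₂b, ht₂⟩ := hp₂.exists_adj_support_eq_interior ⟨y, hy⟩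
  obtain ⟨e₃, t₃, -, he₃b, ht₃⟩ := hp₃.exists_adj_support_eq_diff hab
  have hr' : ∀ w ∈ r.support, w ∉ p₂.interior ∧ w ∉ p₃.interior := by
    intro w hw
    by_cases hwx : w = x
    · subst hwx
      exact ⟨Set.disjoint_left.1 h₁₂ hx, Set.disjoint_left.1 h₁₃ hx⟩
    · exact hr w hw hwx
  have h₃ : ∀ w ∈ {w | w ∈ p₃.support} \ {b}, w ≠ a → w ∈ p₃.interior :=
    fun w hw hwa => ⟨hw.1, hwa, hw.2⟩
  have ha₃ : a ∈ {w | w ∈ p₃.support} \ {b} := ht₃ ▸ t₃.start_mem_support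
  refine hasMinorPattern_top_of_lt (B := ![{w | w ∈ p₃.support} \ {b}, {b},
    p₁.interior ∪ {w | w ∈ r.support}, p₂.interior]) ?_ ?_ ?_
  · intro i
    fin_cases i
    · exact ht₃ ▸ t₃.connected_induce_support
    · simp
    · exact induce_union_connected (ht₁ ▸ t₁.connected_induce_support).preconnected
        r.connected_induce_support.preconnected ⟨x, hx, r.start_mem_support⟩
    · exact ht₂ ▸ t₂.connected_induce_support
  · intro i j hij
    fin_cases i <;> fin_cases j <;> try simp at hij
    · exact Set.disjoint_sdiff_left
    · exact Set.disjoint_union_right.2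
        ⟨Set.disjoint_left.2 fun w hw h₁ => Set.disjoint_left.1 h₁₃ h₁ (h₃ w hw h₁.2.1),
          Set.disjoint_left.2 fun w hw hwr =>
            (hr' w hwr).2 (h₃ w hw (ne_of_mem_of_not_mem hwr ha))⟩
    · exact Set.disjoint_left.2 fun w hw h₂ => Set.disjoint_left.1 h₂₃ h₂ (h₃ w hw h₂.2.1)
    · exact Set.disjoint_singleton_left.2 fun h => h.elim (fun h => h.2.2 rfl) hb
    · exact Set.disjoint_singleton_left.2 fun h => h.2.2 rfl
    · exact Set.disjoint_union_left.2 ⟨h₁₂, Set.disjoint_left.2 fun w hwr => (hr' w hwr).1⟩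
  · intro i j hij
    fin_cases i <;> fin_cases j <;> try simp at hij
    · exact ⟨e₃, ht₃ ▸ t₃.end_mem_support, b, rfl, he₃b⟩
    · exact ⟨a, ha₃, c₁, Or.inl (ht₁ ▸ t₁.start_mem_support), hac₁⟩
    · exact ⟨a, ha₃, c₂, ht₂ ▸ t₂.start_mem_support, hac₂⟩
    · exact ⟨b, rfl, e₁, Or.inl (ht₁ ▸ t₁.end_mem_support), he₁b.symm⟩
    · exact ⟨b, rfl, e₂, ht₂ ▸ t₂.end_mem_support, he₂b.symm⟩
    · exact ⟨z, Or.inr r.end_mem_support, y, hy, hzy⟩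

theorem stmt17_general {V : Type*} (G : SimpleGraph V)
    (hsp : SeriesParallel G) (a b : V) (hab : a ≠ b)
    (paths : Fin 3 → G.Walk a b)
    (hpath : ∀ i, (paths i).IsPath)
    (hdisj : ∀ i j, i ≠ j → ∀ w, w ∈ (paths i).support → w ∈ (paths j).support →
      w = a ∨ w = b) :
    ∀ i j, i ≠ j → ∀ x y : V,
      x ∈ (paths i).support → x ≠ a → x ≠ b →
      y ∈ (paths j).support → y ≠ a → y ≠ b →
      ∀ q : G.Walk x y, q.IsPath → a ∈ q.support ∨ b ∈ q.support := by
  intro i j hij x y hx hxa hxb hy hya hyb q _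
  by_contra! hq
  have hS : Pairwise (Disjoint on fun k => (paths k).interior) := fun k l hkl =>
    Set.disjoint_left.2 fun w hk hl => (hdisj k l hkl w hk.1 hl.1).elim hk.2.1 hk.2.2
  obtain ⟨i', j', x', z, y', r, hij', hx', hy', hzy, hrq, hr⟩ :=
    q.exists_adj_walk_between_parts hS hij ⟨hx, hxa, hxb⟩ ⟨hy, hya, hyb⟩
  obtain ⟨k, hki, hkj⟩ : ∃ k, k ≠ i' ∧ k ≠ j' := by
    revert hij'; fin_cases i' <;> fin_cases j' <;> decide
  exact hsp (hasMinorPattern_top_of_theta_bridge hab (hpath i') (hpath j') (hpath k)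
    (hS hij') (hS hki.symm) (hS hkj.symm) hx' hy' r hzy (fun h => hq.1 (hrq h))
    (fun h => hq.2 (hrq h)) fun w hw hwx => ⟨hr w hw hwx j', hr w hw hwx k⟩)

/-- In a series-parallel graph, if `a` and `b` are joined by three internally
vertex-disjoint paths (each with an internal vertex), then every simple path
between internal vertices of two different ones of these paths passes
through `a` or `b`. -/
theorem stmt17 {V : Type*} [DecidableEq V] (G : SimpleGraph V)
    (hsp : SeriesParallel G) (a b : V) (hab : a ≠ b)
    (paths : Fin 3 → G.Walk a b)
    (hpath : ∀ i, (paths i).IsPath)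
    (hint : ∀ i, ∃ w ∈ (paths i).support, w ≠ a ∧ w ≠ b)
    (hdisj : ∀ i j, i ≠ j → ∀ w, w ∈ (paths i).support → w ∈ (paths j).support →
      w = a ∨ w = b) :
    ∀ i j, i ≠ j → ∀ x y : V,
      x ∈ (paths i).support → x ≠ a → x ≠ b →
      y ∈ (paths j).support → y ≠ a → y ≠ b →
      ∀ q : G.Walk x y, q.IsPath → a ∈ q.support ∨ b ∈ q.support :=
  stmt17_general G hsp a b hab paths hpath hdisj
end
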